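/- arXiv:2401.05724 — 7 statements merged into one kernel-verified Lean document; each statement's English description precedes it below -/
import Mathlib

section
/- Let f ∈ ℤ[X] be a monic polynomial of degree at least two, and let u ≥ 2 be an integer with the following property: any collection of u distinct complex roots of f contains two roots summing to zero. Then there is a threshold N₀ (depending on f) such that for every integer N ≥ N₀ and every prime p > 2N, the number of integers 1 ≤ n ≤ N with p ∣ f(n) is at most u − 1. -/
set_option maxHeartbeats 1000000

open Polynomial UniqueFactorizationMonoid

private lemma nf_multiset_prod {M : Type*} [CommMonoidWithZero M] [IsCancelMulZero M] [NormalizationMonoid M]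
    [UniqueFactorizationMonoid M] [Nontrivial M] (m : Multiset M) (h1 : ∀ q ∈ m, Prime q)
    (h2 : ∀ q ∈ m, normalize q = q) : normalizedFactors m.prod = m := by
  induction m using Multiset.induction_on with
  | empty => simp
  | cons q m ih =>
    have hq : Prime q := h1 q (Multiset.mem_cons_self q m)
    have hm : ∀ x ∈ m, Prime x := fun x hx => h1 x (Multiset.mem_cons_of_mem hx)
    rw [Multiset.prod_cons, normalizedFactors_mul hq.ne_zero (m.prod_ne_zero_of_prime hm),
      normalizedFactors_irreducible hq.irreducible, h2 q (Multiset.mem_cons_self q m),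
      ih hm (fun x hx => h2 x (Multiset.mem_cons_of_mem hx)), ← Multiset.singleton_add]

private lemma radical_eq_val_prod {M : Type*} [CommMonoidWithZero M] [IsCancelMulZero M]
    [NormalizationMonoid M] [UniqueFactorizationMonoid M] (a : M) :
    radical a = (primeFactors a).val.prod := by
  rw [radical, Finset.prod_eq_multiset_prod, Multiset.map_id]

private lemma my_dvd_radical_pow {M : Type*} [CommMonoidWithZero M] [IsCancelMulZero M] [NormalizationMonoid M]
    [UniqueFactorizationMonoid M] {a : M} (ha : a ≠ 0) {n : ℕ}
    (hn : Multiset.card (normalizedFactors a) ≤ n) : a ∣ radical a ^ n := by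
  classical
  have h1 : Associated (normalizedFactors a).prod a := prod_normalizedFactors ha
  refine h1.symm.dvd.trans ?_
  have h2 : radical a ^ n = (n • (primeFactors a).val).prod := by
    rw [Multiset.prod_nsmul, radical_eq_val_prod]
  rw [h2]
  apply Multiset.prod_dvd_prod_of_le
  rw [Multiset.le_iff_count]
  intro x
  rw [Multiset.count_nsmul, primeFactors, Multiset.toFinset_val, Multiset.count_dedup]
  by_cases hx : x ∈ normalizedFactors a
  · simp only [hx, if_pos, mul_one]
    exact le_trans (Multiset.count_le_card x _) hn
  · simp [Multiset.count_eq_zero_of_notMem hx, hx]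

private lemma my_radical_squarefree {M : Type*} [CommMonoidWithZero M] [IsCancelMulZero M]
    [NormalizationMonoid M] [UniqueFactorizationMonoid M] [Nontrivial M] {a : M} (ha : a ≠ 0) :
    Squarefree (radical a) := by
  classical
  rw [squarefree_iff_nodup_normalizedFactors (radical_ne_zero (a := a)), radical_eq_val_prod]
  have h := nf_multiset_prod (primeFactors a).val
    (fun q hq => prime_of_normalized_factor q (Multiset.mem_toFinset.mp hq))
    (fun q hq => normalize_normalized_factor q (Multiset.mem_toFinset.mp hq))
  rw [h]
  exact (primeFactors a).nodup

theorem key_lemma_zero_sums (f : Polynomial ℤ) (hmonic : f.Monic)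
    (hdeg : 2 ≤ f.natDegree) (u : ℕ) (hu : 2 ≤ u)
    (hroots : ∀ S : Finset ℂ, (∀ α ∈ S, Polynomial.aeval α f = 0) → S.card = u →
      ∃ α ∈ S, ∃ β ∈ S, α ≠ β ∧ α + β = 0) :
    ∃ N₀ : ℕ, ∀ N : ℕ, N₀ ≤ N → ∀ p : ℕ, p.Prime → 2 * N < p →
      ((Finset.Icc 1 N).filter fun n : ℕ => (p : ℤ) ∣ f.eval (n : ℤ)).card ≤ u - 1 := by
  classical
  have hf0 : f ≠ 0 := hmonic.ne_zero
  set F : Polynomial ℤ := f * f.comp (-X) with hFdef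
  have hFeval : ∀ n : ℤ, F.eval n = f.eval n * f.eval (-n) := by
    intro n; simp [hFdef, eval_comp]
  have hFc : (f.comp (-X)).comp (-X) = f := by
    rw [comp_assoc]; simp
  have hcomp0 : f.comp (-X) ≠ 0 := fun h => hf0 (by rw [← hFc, h, zero_comp])
  have hF0 : F ≠ 0 := mul_ne_zero hf0 hcomp0
  have hφ : Function.Injective (algebraMap ℤ ℚ) := fun a b h => by exact_mod_cast h
  set Fq : Polynomial ℚ := F.map (algebraMap ℤ ℚ) with hFq
  have hFq0 : Fq ≠ 0 := (Polynomial.map_ne_zero_iff hφ).mpr hF0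
  set Rq : Polynomial ℚ := radical Fq with hRq
  have hRq0 : Rq ≠ 0 := radical_ne_zero
  set K : ℕ := Multiset.card (normalizedFactors Fq) + 1 with hK
  obtain ⟨Hq, hHq⟩ : Fq ∣ Rq ^ K := my_dvd_radical_pow hFq0 (Nat.le_succ _)
  set R : Polynomial ℤ := IsLocalization.integerNormalization (nonZeroDivisors ℤ) Rq with hR
  obtain ⟨c, hc⟩ := IsLocalization.integerNormalization_map_to_map (nonZeroDivisors ℤ) Rq
  rw [← hR] at hc
  set H : Polynomial ℤ := IsLocalization.integerNormalization (nonZeroDivisors ℤ) Hq with hH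
  obtain ⟨d, hd⟩ := IsLocalization.integerNormalization_map_to_map (nonZeroDivisors ℤ) Hq
  rw [← hH] at hd
  have hc0 : (c : ℤ) ≠ 0 := nonZeroDivisors.coe_ne_zero c
  have hd0 : (d : ℤ) ≠ 0 := nonZeroDivisors.coe_ne_zero d
  -- the key evaluation identity over ℤ
  have key : ∀ n : ℤ, (d : ℤ) * (R.eval n) ^ K = (c : ℤ) ^ K * (F.eval n * H.eval n) := by
    intro n
    have eRq := congrArg (Polynomial.eval ((n : ℚ))) hHq
    simp only [eval_pow, eval_mul] at eRq
    have a1 : ((R.eval n : ℤ) : ℚ) = (c : ℤ) * Rq.eval (n : ℚ) := by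
      calc ((R.eval n : ℤ) : ℚ) = (R.map (algebraMap ℤ ℚ)).eval ((n : ℤ) : ℚ) :=
            (eval_intCast_map (algebraMap ℤ ℚ) R n).symm
        _ = ((c : ℤ) • Rq).eval (n : ℚ) := by rw [hc]
        _ = (c : ℤ) * Rq.eval (n : ℚ) := by rw [eval_smul, zsmul_eq_mul]
    have a2 : ((H.eval n : ℤ) : ℚ) = (d : ℤ) * Hq.eval (n : ℚ) := by
      calc ((H.eval n : ℤ) : ℚ) = (H.map (algebraMap ℤ ℚ)).eval ((n : ℤ) : ℚ) :=
            (eval_intCast_map (algebraMap ℤ ℚ) H n).symm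
        _ = ((d : ℤ) • Hq).eval (n : ℚ) := by rw [hd]
        _ = (d : ℤ) * Hq.eval (n : ℚ) := by rw [eval_smul, zsmul_eq_mul]
    have a3 : ((F.eval n : ℤ) : ℚ) = Fq.eval (n : ℚ) :=
      (eval_intCast_map (algebraMap ℤ ℚ) F n).symm
    apply (Int.cast_injective (α := ℚ))
    push_cast
    rw [a1, a2, a3, mul_pow, eRq]
    ring
  -- complex side
  set FC : Polynomial ℂ := F.map (Int.castRingHom ℂ) with hFC
  have hψ : Function.Injective (Int.castRingHom ℂ) := fun a b h => Int.cast_injective h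
  have hFC0 : FC ≠ 0 := (Polynomial.map_ne_zero_iff hψ).mpr hF0
  set T : Finset ℂ := FC.roots.toFinset with hT
  set Sq : Finset ℂ := T.image (fun z => z * z) with hSq
  have hTroot : ∀ β ∈ T, (Polynomial.aeval β f = 0) ∨ (Polynomial.aeval (-β) f = 0) := by
    intro β hβ
    rw [hT, Multiset.mem_toFinset, mem_roots hFC0] at hβ
    have h0 : FC.eval β = 0 := hβ
    rw [hFC, hFdef, Polynomial.map_mul, eval_mul] at h0
    rcases mul_eq_zero.mp h0 with h | h
    · left
      rw [aeval_def, ← eval_map]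
      rwa [algebraMap_int_eq]
    · right
      rw [Polynomial.map_comp, Polynomial.map_neg, map_X, eval_comp, eval_neg, eval_X] at h
      rw [aeval_def, ← eval_map]
      rwa [algebraMap_int_eq]
  have hSqcard : Sq.card ≤ u - 1 := by
    by_contra hlt
    push_neg at hlt
    have hu1 : u ≤ Sq.card := by omega
    obtain ⟨Sq', hSq'sub, hSq'card⟩ := Finset.exists_subset_card_eq hu1
    set g : ℂ → ℂ := fun τ =>
      if h : ∃ α : ℂ, Polynomial.aeval α f = 0 ∧ α * α = τ then h.choose else 0 with hg
    have hgspec : ∀ τ ∈ Sq', Polynomial.aeval (g τ) f = 0 ∧ (g τ) * (g τ) = τ := by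
      intro τ hτ
      have hτ' : τ ∈ Sq := hSq'sub hτ
      rw [hSq, Finset.mem_image] at hτ'
      obtain ⟨β, hβT, hββ⟩ := hτ'
      have hex : ∃ α : ℂ, Polynomial.aeval α f = 0 ∧ α * α = τ := by
        rcases hTroot β hβT with h | h
        · exact ⟨β, h, hββ⟩
        · exact ⟨-β, h, by rw [neg_mul_neg]; exact hββ⟩
      rw [hg]
      simp only [dif_pos hex]
      exact hex.choose_spec
    have hginj : Set.InjOn g Sq' := by
      intro x hx y hy hxy
      rw [← (hgspec x hx).2, ← (hgspec y hy).2, hxy]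
    set S : Finset ℂ := Sq'.image g with hS
    have hScard : S.card = u := by rw [hS, Finset.card_image_of_injOn hginj, hSq'card]
    have hSroots : ∀ α ∈ S, Polynomial.aeval α f = 0 := by
      intro α hα
      rw [hS, Finset.mem_image] at hα
      obtain ⟨τ, hτ, rfl⟩ := hα
      exact (hgspec τ hτ).1
    obtain ⟨α, hα, β, hβ, hne, hsum⟩ := hroots S hSroots hScard
    rw [hS, Finset.mem_image] at hα hβ
    obtain ⟨τ₁, hτ₁, rfl⟩ := hα
    obtain ⟨τ₂, hτ₂, rfl⟩ := hβ
    have hβeq : g τ₂ = - g τ₁ := by linear_combination hsum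
    have hττ : τ₁ = τ₂ := by
      rw [← (hgspec τ₁ hτ₁).2, ← (hgspec τ₂ hτ₂).2, hβeq]; ring
    exact hne (by rw [hττ])
  have hTcard : T.card ≤ 2 * Sq.card := by
    rw [hSq]
    apply Finset.card_le_mul_card_image
    intro b hb
    obtain ⟨β₀, hβ₀, hβ₀b⟩ := Finset.mem_image.mp hb
    have hsub : (T.filter (fun a => a * a = b)) ⊆ {β₀, -β₀} := by
      intro x hx
      obtain ⟨hxT, hxb⟩ := Finset.mem_filter.mp hx
      have hzero : (x - β₀) * (x + β₀) = 0 := by linear_combination hxb - hβ₀b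
      rcases mul_eq_zero.mp hzero with h | h
      · simp [sub_eq_zero.mp h]
      · simp [eq_neg_of_add_eq_zero_left h]
    calc (T.filter (fun a => a * a = b)).card ≤ ({β₀, -β₀} : Finset ℂ).card :=
          Finset.card_le_card hsub
      _ ≤ 2 := (Finset.card_insert_le _ _).trans (by simp)
  -- degree of Rq
  have hRqsep : Rq.Separable :=
    (PerfectField.separable_iff_squarefree).mpr (my_radical_squarefree hFq0)
  set RC : Polynomial ℂ := Rq.map (algebraMap ℚ ℂ) with hRC
  have hdeg1 : Rq.natDegree = Multiset.card RC.roots :=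
    by rw [← natDegree_map (algebraMap ℚ ℂ)]; exact (IsAlgClosed.splits _).natDegree_eq_card_roots
  have hnodup : RC.roots.Nodup := nodup_roots hRqsep.map
  have hdvdC : RC ∣ FC := by
    have h1 : Rq ∣ Fq := radical_dvd_self
    have h2 := Polynomial.map_dvd (algebraMap ℚ ℂ) h1
    rw [hFq, map_map] at h2
    rwa [Subsingleton.elim ((algebraMap ℚ ℂ).comp (algebraMap ℤ ℚ)) (Int.castRingHom ℂ)] at h2
  have hroots_sub : RC.roots.toFinset ⊆ T := by
    rw [hT]
    exact Multiset.toFinset_subset.mpr (Multiset.subset_of_le (roots.le_of_dvd hFC0 hdvdC))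
  have hdeg2 : Rq.natDegree ≤ 2 * (u - 1) := by
    rw [hdeg1, ← Multiset.toFinset_card_of_nodup hnodup]
    calc RC.roots.toFinset.card ≤ T.card := Finset.card_le_card hroots_sub
      _ ≤ 2 * Sq.card := hTcard
      _ ≤ 2 * (u - 1) := by omega
  have hRdeg : R.natDegree ≤ 2 * (u - 1) := by
    have e1 : R.natDegree = (R.map (algebraMap ℤ ℚ)).natDegree :=
      (natDegree_map_eq_of_injective hφ R).symm
    rw [e1, hc, ← Int.cast_smul_eq_zsmul ℚ]
    exact (natDegree_smul_le _ _).trans hdeg2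
  have hR0 : R ≠ 0 := fun h => hRq0 (IsFractionRing.integerNormalization_eq_zero_iff.mp h)
  have hlc0 : R.leadingCoeff ≠ 0 := leadingCoeff_ne_zero.mpr hR0
  -- the threshold
  refine ⟨(d : ℤ).natAbs + R.leadingCoeff.natAbs + 1, ?_⟩
  intro N hN p hp hpN
  haveI : Fact p.Prime := ⟨hp⟩
  have hpint : Prime (p : ℤ) := Nat.prime_iff_prime_int.mp hp
  set s := (Finset.Icc 1 N).filter (fun n : ℕ => (p : ℤ) ∣ f.eval (n : ℤ)) with hs
  have hpd : ¬ ((p : ℤ) ∣ (d : ℤ)) := by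
    intro hdvd
    have h1 : ((p : ℕ) : ℤ) ∣ ((d : ℤ).natAbs : ℤ) := (Int.dvd_natAbs).mpr hdvd
    have h2 : (p : ℕ) ∣ (d : ℤ).natAbs := Int.ofNat_dvd.mp h1
    have h3 : p ≤ (d : ℤ).natAbs := Nat.le_of_dvd (Int.natAbs_pos.mpr hd0) h2
    omega
  have hplc : ¬ ((p : ℤ) ∣ R.leadingCoeff) := by
    intro hdvd
    have h1 : ((p : ℕ) : ℤ) ∣ (R.leadingCoeff.natAbs : ℤ) := (Int.dvd_natAbs).mpr hdvd
    have h2 : (p : ℕ) ∣ R.leadingCoeff.natAbs := Int.ofNat_dvd.mp h1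
    have h3 : p ≤ R.leadingCoeff.natAbs := Nat.le_of_dvd (Int.natAbs_pos.mpr hlc0) h2
    omega
  set Rp : Polynomial (ZMod p) := R.map (Int.castRingHom (ZMod p)) with hRp
  have hRp0 : Rp ≠ 0 := by
    intro h
    have h1 : Rp.coeff R.natDegree = 0 := by rw [h, coeff_zero]
    rw [hRp, coeff_map] at h1
    apply hplc
    rwa [← ZMod.intCast_zmod_eq_zero_iff_dvd]
  have hroot : ∀ n : ℤ, (p : ℤ) ∣ F.eval n → Rp.IsRoot ((n : ℤ) : ZMod p) := by
    intro n hFn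
    have h1 : (p : ℤ) ∣ (d : ℤ) * (R.eval n) ^ K := by
      rw [key n]
      exact Dvd.dvd.mul_left (hFn.mul_right _) _
    have h3 : (p : ℤ) ∣ R.eval n :=
      hpint.dvd_of_dvd_pow ((hpint.dvd_mul.mp h1).resolve_left hpd)
    show Rp.eval ((n : ℤ) : ZMod p) = 0
    rw [hRp, eval_intCast_map]
    simp only [Int.cast_id, eq_intCast]
    rwa [ZMod.intCast_zmod_eq_zero_iff_dvd]
  have hmemN : ∀ n ∈ s, 1 ≤ n ∧ n ≤ N ∧ (p : ℤ) ∣ f.eval (n : ℤ) := by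
    intro n hn
    obtain ⟨h1, h2⟩ := Finset.mem_filter.mp hn
    obtain ⟨h3, h4⟩ := Finset.mem_Icc.mp h1
    exact ⟨h3, h4, h2⟩
  set e : ℕ → ZMod p := fun n => ((n : ℤ) : ZMod p) with he
  have heinj : Set.InjOn e s := by
    intro a ha b hb hab
    have haN := hmemN a ha
    have hbN := hmemN b hb
    have h1 : ((a : ℕ) : ZMod p) = ((b : ℕ) : ZMod p) := by
      simpa [he] using hab
    have h2 := congrArg ZMod.val h1
    rwa [ZMod.val_natCast_of_lt (by omega), ZMod.val_natCast_of_lt (by omega)] at h2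
  set A1 : Finset (ZMod p) := s.image e with hA1
  set A2 : Finset (ZMod p) := s.image (fun n => - e n) with hA2
  have hA1card : A1.card = s.card := Finset.card_image_of_injOn heinj
  have hA2card : A2.card = s.card :=
    Finset.card_image_of_injOn (fun a ha b hb hab => heinj ha hb (neg_injective hab))
  have hdisj : Disjoint A1 A2 := by
    rw [Finset.disjoint_left]
    intro x hx1 hx2
    obtain ⟨a, ha, rfl⟩ := Finset.mem_image.mp hx1
    obtain ⟨b, hb, hba⟩ := Finset.mem_image.mp hx2
    have hz : ((a + b : ℕ) : ZMod p) = 0 := by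
      push_cast
      have : e a + e b = 0 := by rw [← hba]; ring
      simpa [he] using this
    rw [ZMod.natCast_eq_zero_iff] at hz
    have haN := hmemN a ha
    have hbN := hmemN b hb
    have := Nat.le_of_dvd (by omega) hz
    omega
  have hsub : A1 ∪ A2 ⊆ Rp.roots.toFinset := by
    intro x hx
    rw [Multiset.mem_toFinset, mem_roots hRp0]
    rcases Finset.mem_union.mp hx with h | h
    · obtain ⟨a, ha, rfl⟩ := Finset.mem_image.mp h
      have hFa : (p : ℤ) ∣ F.eval ((a : ℕ) : ℤ) := by
        rw [hFeval]
        exact ((hmemN a ha).2.2).mul_right _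
      exact hroot _ hFa
    · obtain ⟨a, ha, rfl⟩ := Finset.mem_image.mp h
      have hFa : (p : ℤ) ∣ F.eval (-((a : ℕ) : ℤ)) := by
        rw [hFeval, neg_neg]
        exact Dvd.dvd.mul_left ((hmemN a ha).2.2) _
      have := hroot _ hFa
      simpa [he] using this
  have final : 2 * s.card ≤ 2 * (u - 1) := by
    calc 2 * s.card = A1.card + A2.card := by rw [hA1card, hA2card]; ring
      _ = (A1 ∪ A2).card := (Finset.card_union_of_disjoint hdisj).symm
      _ ≤ Rp.roots.toFinset.card := Finset.card_le_card hsub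
      _ ≤ Multiset.card Rp.roots := Multiset.toFinset_card_le _
      _ ≤ Rp.natDegree := Polynomial.card_roots' Rp
      _ ≤ R.natDegree := natDegree_map_le
      _ ≤ 2 * (u - 1) := hRdeg
  omega
end

section
/- Let f ∈ ℤ[X] be an irreducible polynomial of degree d ≥ 2. Then there exists a constant c > 0 (depending on f) such that for every integer N ≥ 2, every prime p > c·N and every positive integer ν, the number of integers 1 ≤ n ≤ N with p^ν ∣ f(n) is at most d − ν. -/
open Polynomial Finset



noncomputable def qw (S : Finset ℚ) (i : ℚ) : ℚ := ∏ j ∈ S.erase i, (i - j)⁻¹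

noncomputable def Lsum (t : ℕ) (S : Finset ℚ) : ℚ := ∑ i ∈ S, i ^ t * qw S i

lemma coeff_interpolate (S : Finset ℚ) (r : ℚ → ℚ) :
    (Lagrange.interpolate S id r).coeff (S.card - 1) = ∑ i ∈ S, r i * qw S i := by
  rw [Lagrange.interpolate_apply, Polynomial.finset_sum_coeff]
  refine Finset.sum_congr rfl fun i hi => ?_
  rw [Polynomial.coeff_C_mul]
  congr 1
  have hinj : Set.InjOn (id : ℚ → ℚ) S := Function.injective_id.injOn
  have hdeg := Lagrange.natDegree_basis hinj hi
  have h1 : (Lagrange.basis S id i).coeff (S.card - 1) = (Lagrange.basis S id i).leadingCoeff := by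
    rw [Polynomial.leadingCoeff, hdeg]
  rw [h1, Lagrange.basis, Polynomial.leadingCoeff_prod]
  unfold qw
  refine Finset.prod_congr rfl fun j hj => ?_
  rw [Lagrange.basisDivisor, Polynomial.leadingCoeff_mul, Polynomial.leadingCoeff_C,
    (Polynomial.monic_X_sub_C _).leadingCoeff, mul_one]
  simp

lemma lsum_low (S : Finset ℚ) (t : ℕ) (ht : t + 2 ≤ S.card) : Lsum t S = 0 := by
  have hinj : Set.InjOn (id : ℚ → ℚ) S := Function.injective_id.injOn
  have hdlt : (X ^ t : ℚ[X]).degree < S.card := by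
    rw [Polynomial.degree_X_pow]
    exact_mod_cast (by omega : t < S.card)
  have h1 : (X ^ t : ℚ[X]) = Lagrange.interpolate S id fun x => x ^ t :=
    Lagrange.eq_interpolate_of_eval_eq (r := fun x => x ^ t) hinj hdlt (fun i _ => by simp)
  have h2 := coeff_interpolate S (fun x => x ^ t)
  rw [← h1, Polynomial.coeff_X_pow, if_neg (by omega)] at h2
  unfold Lsum
  exact h2.symm



lemma lsum_insert {x : ℚ} {S : Finset ℚ} (hx : x ∉ S) (hS : S.Nonempty) (t : ℕ) :
    Lsum t (insert x S) = ∑ k ∈ Finset.range t, x ^ (t - 1 - k) * Lsum k S := by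
  classical
  have hcard : (insert x S).card = S.card + 1 := Finset.card_insert_of_notMem hx
  have h0 : Lsum 0 (insert x S) = 0 := by
    apply lsum_low
    have := Finset.card_pos.mpr hS
    omega
  have hqw : ∀ i ∈ S, qw (insert x S) i = (i - x)⁻¹ * qw S i := by
    intro i hi
    have hne : x ≠ i := by rintro rfl; exact hx hi
    unfold qw
    rw [Finset.erase_insert_of_ne hne, Finset.prod_insert (fun h => hx (Finset.mem_of_mem_erase h))]
  have hsplit : ∀ i ∈ S, i ^ t * qw (insert x S) i
      = x ^ t * qw (insert x S) i
        + ∑ k ∈ Finset.range t, x ^ (t - 1 - k) * (i ^ k * qw S i) := by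
    intro i hi
    have hne : x ≠ i := by rintro rfl; exact hx hi
    have hix : i - x ≠ 0 := sub_ne_zero.mpr hne.symm
    have hgeom : i ^ t = x ^ t + (∑ k ∈ Finset.range t, i ^ k * x ^ (t - 1 - k)) * (i - x) := by
      have h := geom_sum₂_mul i x t
      linarith
    have hcan : (i - x) * qw (insert x S) i = qw S i := by
      rw [hqw i hi, ← mul_assoc, mul_inv_cancel₀ hix, one_mul]
    rw [hgeom, add_mul]
    congr 1
    rw [mul_assoc, hcan, Finset.sum_mul]
    exact Finset.sum_congr rfl fun k _ => by ring
  unfold Lsum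
  rw [Finset.sum_insert hx, Finset.sum_congr rfl hsplit, Finset.sum_add_distrib]
  have hz : x ^ t * qw (insert x S) x + ∑ i ∈ S, x ^ t * qw (insert x S) i = 0 := by
    have h00 : qw (insert x S) x + ∑ i ∈ S, qw (insert x S) i = 0 := by
      have := h0
      unfold Lsum at this
      rw [Finset.sum_insert hx] at this
      simpa using this
    calc x ^ t * qw (insert x S) x + ∑ i ∈ S, x ^ t * qw (insert x S) i
        = x ^ t * (qw (insert x S) x + ∑ i ∈ S, qw (insert x S) i) := by
          rw [mul_add, Finset.mul_sum]
      _ = 0 := by rw [h00, mul_zero]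
  rw [← add_assoc, hz, zero_add, Finset.sum_comm]
  exact Finset.sum_congr rfl fun k _ => by rw [Finset.mul_sum]



lemma lsum_singleton (y : ℚ) (t : ℕ) : Lsum t {y} = y ^ t := by
  unfold Lsum qw; simp

lemma lsum_nonneg_aux : ∀ (n : ℕ), ∀ (S : Finset ℚ), S.card = n → (∀ z ∈ S, 0 ≤ z) →
    ∀ t, 0 ≤ Lsum t S := by
  intro n
  induction n using Nat.strong_induction_on with
  | _ n ih =>
    intro S hcard h0 t
    rcases Nat.lt_or_ge n 2 with h2 | h2
    · interval_cases n
      · rw [Finset.card_eq_zero.mp hcard]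
        simp [Lsum]
      · obtain ⟨y, rfl⟩ := Finset.card_eq_one.mp hcard
        rw [lsum_singleton]
        exact pow_nonneg (h0 y (Finset.mem_singleton_self y)) t
    · obtain ⟨x, hxS⟩ := Finset.card_pos.mp (by omega : 0 < S.card)
      have hT : S = insert x (S.erase x) := (Finset.insert_erase hxS).symm
      have hxT : x ∉ S.erase x := Finset.notMem_erase x S
      have hTc : (S.erase x).card = n - 1 := by
        rw [Finset.card_erase_of_mem hxS, hcard]
      have hTne : (S.erase x).Nonempty := Finset.card_pos.mp (by omega)
      rw [hT, lsum_insert hxT hTne]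
      apply Finset.sum_nonneg
      intro k _
      exact mul_nonneg (pow_nonneg (h0 x hxS) _)
        (ih (n-1) (by omega) _ hTc (fun z hz => h0 z (Finset.mem_of_mem_erase hz)) k)

lemma lsum_nonneg {S : Finset ℚ} (h0 : ∀ z ∈ S, 0 ≤ z) (t : ℕ) : 0 ≤ Lsum t S :=
  lsum_nonneg_aux S.card S rfl h0 t

lemma sum_two_pow (t : ℕ) : ∑ k ∈ Finset.range t, (2:ℚ) ^ (k+1) ≤ 2 ^ (t+1) := by
  induction t with
  | zero => norm_num
  | succ t ih =>
    rw [Finset.sum_range_succ]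
    have : (2:ℚ) ^ (t+1+1) = 2^(t+1) + 2^(t+1) := by ring
    rw [this]
    exact add_le_add ih le_rfl

lemma lsum_upper_aux : ∀ (n : ℕ), ∀ (S : Finset ℚ) (M : ℚ), S.card = n → 1 ≤ M →
    (∀ z ∈ S, 0 ≤ z ∧ z ≤ M) → ∀ t, Lsum t S ≤ 2 ^ (t+1) * M ^ (t + 1 - n) := by
  intro n
  induction n using Nat.strong_induction_on with
  | _ n ih =>
    intro S M hcard hM hz t
    have hMpos : (0:ℚ) < M := lt_of_lt_of_le one_pos hM
    rcases Nat.lt_or_ge n 2 with h2 | h2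
    · interval_cases n
      · rw [Finset.card_eq_zero.mp hcard]
        simp only [Lsum, Finset.sum_empty]
        positivity
      · obtain ⟨y, rfl⟩ := Finset.card_eq_one.mp hcard
        rw [lsum_singleton]
        have h1 : y ^ t ≤ M ^ t := by
          have := hz y (Finset.mem_singleton_self y)
          exact pow_le_pow_left₀ this.1 this.2 t
        have h12 : (1:ℚ) ≤ 2 ^ (t+1) := one_le_pow₀ (by norm_num)
        have h2 : (M:ℚ) ^ t ≤ 2 ^ (t+1) * M ^ t :=
          le_mul_of_one_le_left (by positivity) h12
        calc y ^ t ≤ M ^ t := h1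
          _ ≤ 2 ^ (t+1) * M ^ t := h2
          _ = 2 ^ (t+1) * M ^ (t + 1 - 1) := by norm_num
    · obtain ⟨x, hxS⟩ := Finset.card_pos.mp (by omega : 0 < S.card)
      have hT : S = insert x (S.erase x) := (Finset.insert_erase hxS).symm
      have hxT : x ∉ S.erase x := Finset.notMem_erase x S
      have hTc : (S.erase x).card = n - 1 := by
        rw [Finset.card_erase_of_mem hxS, hcard]
      have hTne : (S.erase x).Nonempty := Finset.card_pos.mp (by omega)
      have hzT : ∀ z ∈ S.erase x, 0 ≤ z ∧ z ≤ M :=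
        fun z hzz => hz z (Finset.mem_of_mem_erase hzz)
      rw [hT, lsum_insert hxT hTne]
      have hterm : ∀ k ∈ Finset.range t,
          x ^ (t - 1 - k) * Lsum k (S.erase x) ≤ 2 ^ (k+1) * M ^ (t + 1 - n) := by
        intro k hk
        have hkt : k < t := Finset.mem_range.mp hk
        rcases Nat.lt_or_ge (k + 1) (n - 1) with hklow | hkhigh
        · rw [lsum_low _ k (by omega), mul_zero]
          positivity
        · have hub := ih (n-1) (by omega) _ M hTc hM hzT k
          have hnn := lsum_nonneg (S := S.erase x) (fun z hzz => (hzT z hzz).1) k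
          have hxM := hz x hxS
          have hxp : x ^ (t-1-k) ≤ M ^ (t-1-k) := pow_le_pow_left₀ hxM.1 hxM.2 _
          calc x ^ (t-1-k) * Lsum k (S.erase x)
              ≤ M ^ (t-1-k) * (2 ^ (k+1) * M ^ (k + 1 - (n-1))) := by
                apply mul_le_mul hxp hub hnn (by positivity)
            _ = 2 ^ (k+1) * (M ^ (t-1-k) * M ^ (k + 1 - (n-1))) := by ring
            _ = 2 ^ (k+1) * M ^ (t + 1 - n) := by
                rw [← pow_add]
                congr 2
                omega
      calc ∑ k ∈ Finset.range t, x ^ (t - 1 - k) * Lsum k (S.erase x)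
          ≤ ∑ k ∈ Finset.range t, 2 ^ (k+1) * M ^ (t + 1 - n) :=
            Finset.sum_le_sum hterm
        _ = (∑ k ∈ Finset.range t, (2:ℚ) ^ (k+1)) * M ^ (t + 1 - n) := by
            rw [Finset.sum_mul]
        _ ≤ 2 ^ (t+1) * M ^ (t + 1 - n) := by
            apply mul_le_mul_of_nonneg_right (sum_two_pow t) (by positivity)

lemma lsum_upper {S : Finset ℚ} {M : ℚ} (hM : 1 ≤ M) (hz : ∀ z ∈ S, 0 ≤ z ∧ z ≤ M) (t : ℕ) :
    Lsum t S ≤ 2 ^ (t+1) * M ^ (t + 1 - S.card) :=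
  lsum_upper_aux S.card S M rfl hM hz t

lemma lsum_lower_aux : ∀ (n : ℕ), ∀ (S : Finset ℚ) (y : ℚ), S.card = n → y ∈ S →
    (∀ z ∈ S, 0 ≤ z) → ∀ s : ℕ, y ^ s ≤ Lsum (n - 1 + s) S := by
  intro n
  induction n using Nat.strong_induction_on with
  | _ n ih =>
    intro S y hcard hy h0 s
    rcases Nat.lt_or_ge n 2 with h2 | h2
    · interval_cases n
      · exact absurd (Finset.card_eq_zero.mp hcard ▸ hy) (Finset.notMem_empty y)
      · obtain ⟨y', rfl⟩ := Finset.card_eq_one.mp hcard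
        rw [Finset.mem_singleton.mp hy] at *
        rw [lsum_singleton]
        norm_num
    · obtain ⟨x, hxS, hxy⟩ := Finset.exists_mem_ne (show 1 < S.card by omega) y
      have hT : S = insert x (S.erase x) := (Finset.insert_erase hxS).symm
      have hxT : x ∉ S.erase x := Finset.notMem_erase x S
      have hTc : (S.erase x).card = n - 1 := by
        rw [Finset.card_erase_of_mem hxS, hcard]
      have hTne : (S.erase x).Nonempty := Finset.card_pos.mp (by omega)
      have hyT : y ∈ S.erase x := Finset.mem_erase.mpr ⟨fun h => hxy (h ▸ rfl), hy⟩
      have h0T : ∀ z ∈ S.erase x, 0 ≤ z := fun z hzz => h0 z (Finset.mem_of_mem_erase hzz)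
      rw [hT, lsum_insert hxT hTne]
      have hk0 : n - 2 + s ∈ Finset.range (n - 1 + s) := Finset.mem_range.mpr (by omega)
      have hkey : y ^ s ≤ x ^ (n - 1 + s - 1 - (n - 2 + s)) * Lsum (n - 2 + s) (S.erase x) := by
        have hexp : n - 1 + s - 1 - (n - 2 + s) = 0 := by omega
        rw [hexp, pow_zero, one_mul]
        have h := ih (n-1) (by omega) (S.erase x) y hTc hyT h0T s
        have hee : n - 1 - 1 + s = n - 2 + s := by omega
        rw [hee] at h
        exact h
      exact le_trans hkey (Finset.single_le_sum
        (fun k _ => mul_nonneg (pow_nonneg (h0 x hxS) _) (lsum_nonneg h0T k)) hk0)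


lemma poly_eq_zero_of_unit_roots {R : Type*} [CommRing R] [Nontrivial R] :
    ∀ (l : List R) (q : Polynomial R), (l.Pairwise fun a b => IsUnit (a - b)) →
    (∀ x ∈ l, q.eval x = 0) → q.degree < l.length → q = 0 := by
  intro l
  induction l with
  | nil =>
    intro q _ _ hdeg
    have hb : q.degree = ⊥ := Nat.WithBot.lt_zero_iff.mp (by simpa using hdeg)
    exact Polynomial.degree_eq_bot.mp hb
  | cons x xs ih =>
    intro q hpw hroots hdeg
    obtain ⟨hx, hxs⟩ := List.pairwise_cons.mp hpw
    obtain ⟨q', rfl⟩ := Polynomial.dvd_iff_isRoot.mpr (hroots x (List.mem_cons_self (a := x) (l := xs)))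
    rcases eq_or_ne q' 0 with rfl | hq'
    · exact mul_zero _
    · have hq'z : q' = 0 := by
        apply ih _ hxs
        · intro y hy
          have h1 : (y - x) * q'.eval y = 0 := by
            have := hroots y (List.mem_cons_of_mem x hy)
            simpa [Polynomial.eval_mul] using this
          have hu : IsUnit (y - x) := by
            have := (hx y hy).neg
            rwa [neg_sub] at this
          obtain ⟨w, hw⟩ := hu.exists_left_inv
          calc q'.eval y = (w * (y - x)) * q'.eval y := by rw [hw, one_mul]
            _ = w * ((y - x) * q'.eval y) := by ring
            _ = 0 := by rw [h1, mul_zero]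
        · have hmul : ((X - C x) * q').degree = 1 + q'.degree := by
            rw [mul_comm, (Polynomial.monic_X_sub_C x).degree_mul, Polynomial.degree_X_sub_C,
              add_comm]
          rw [hmul] at hdeg
          have hdq : q'.degree = (q'.natDegree : WithBot ℕ) := Polynomial.degree_eq_natDegree hq'
          rw [hdq] at hdeg ⊢
          simp only [List.length_cons] at hdeg
          have : (1 : WithBot ℕ) + (q'.natDegree : WithBot ℕ) = ((q'.natDegree + 1 : ℕ) : WithBot ℕ) := by
            push_cast; ring
          rw [this] at hdeg
          have h2 : q'.natDegree + 1 < xs.length + 1 := by exact_mod_cast hdeg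
          exact_mod_cast (by omega : q'.natDegree < xs.length)
      rw [hq'z, mul_zero]


lemma rem_coeff_dvd (f : Polynomial ℤ) (S₀ : Finset ℕ) (p : ℕ) (hp : p.Prime) (μ : ℕ)
    (hμ : μ ≠ 0)
    (hdist : ∀ a ∈ S₀, ∀ b ∈ S₀, a ≠ b → ¬ ((p:ℤ) ∣ (a:ℤ) - (b:ℤ)))
    (hdvd : ∀ n ∈ S₀, (p:ℤ)^μ ∣ f.eval (n:ℤ)) (k : ℕ) :
    (p:ℤ)^μ ∣ (f %ₘ ∏ n ∈ S₀, (X - C (n:ℤ))).coeff k := by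
  classical
  set P : Polynomial ℤ := ∏ n ∈ S₀, (X - C (n:ℤ)) with hP
  have hPm : P.Monic := monic_prod_of_monic _ _ (fun n _ => monic_X_sub_C _)
  haveI : Fact (1 < p ^ μ) := ⟨Nat.one_lt_pow hμ hp.one_lt⟩
  set R := ZMod (p ^ μ)
  set φ : ℤ →+* R := Int.castRingHom R with hφ
  set r : Polynomial ℤ := f %ₘ P with hr
  set q : Polynomial R := r.map φ with hq
  set l : List R := S₀.toList.map (fun n : ℕ => φ (n : ℤ)) with hl
  have hpw : l.Pairwise fun a b => IsUnit (a - b) := by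
    rw [hl, List.pairwise_map]
    refine List.Pairwise.imp_of_mem ?_ (S₀.nodup_toList)
    intro a b ha hb hab
    have ha' : a ∈ S₀ := Finset.mem_toList.mp ha
    have hb' : b ∈ S₀ := Finset.mem_toList.mp hb
    have hnd : ¬ ((p:ℤ) ∣ (a:ℤ) - (b:ℤ)) := hdist a ha' b hb' hab
    have hcop : IsCoprime ((p:ℤ)^μ) ((a:ℤ) - (b:ℤ)) :=
      IsCoprime.pow_left (((Nat.prime_iff_prime_int.mp hp).coprime_iff_not_dvd).mpr hnd)
    obtain ⟨u, v, huv⟩ := hcop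
    have hz : φ ((p:ℤ)^μ) = 0 := by
      rw [hφ]
      simp only [map_pow, Int.coe_castRingHom]
      push_cast
      exact_mod_cast ZMod.natCast_self (p ^ μ)
    have h1 : φ v * (φ (a:ℤ) - φ (b:ℤ)) = 1 := by
      have := congrArg φ huv
      rw [map_add, map_mul, map_mul, map_one, hz, mul_zero, zero_add, map_sub] at this
      exact this
    exact IsUnit.of_mul_eq_one _ ((mul_comm _ _).trans h1)
  have hroots : ∀ x ∈ l, q.eval x = 0 := by
    intro x hx
    rw [hl] at hx
    obtain ⟨n, hn, rfl⟩ := List.mem_map.mp hx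
    have hn' : n ∈ S₀ := Finset.mem_toList.mp hn
    have heval : q.eval (φ (n:ℤ)) = φ (r.eval (n:ℤ)) := by
      rw [hq, Polynomial.eval_map, Polynomial.eval₂_at_apply]
    have hre : r.eval (n:ℤ) = f.eval (n:ℤ) := by
      rw [hr, Polynomial.modByMonic_eq_sub_mul_div f P, Polynomial.eval_sub,
        Polynomial.eval_mul]
      have hPz : P.eval (n:ℤ) = 0 := by
        rw [hP, Polynomial.eval_prod]
        exact Finset.prod_eq_zero hn' (by simp)
      rw [hPz, zero_mul, sub_zero]
    rw [heval, hre]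
    have := hdvd n hn'
    rw [hφ]
    simp only [Int.coe_castRingHom]
    rw [ZMod.intCast_zmod_eq_zero_iff_dvd]
    exact_mod_cast this
  have hdeg : q.degree < l.length := by
    have h1 : q.degree ≤ r.degree := Polynomial.degree_map_le
    have h2 : r.degree < P.degree := Polynomial.degree_modByMonic_lt f hPm
    have hnd : P.natDegree = S₀.card := by
      rw [hP, Polynomial.natDegree_prod _ _ (fun n _ => Polynomial.X_sub_C_ne_zero _)]
      simp only [Polynomial.natDegree_X_sub_C]
      exact (Finset.card_eq_sum_ones S₀).symm
    have h3 : P.degree = (S₀.card : WithBot ℕ) := by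
      rw [Polynomial.degree_eq_natDegree hPm.ne_zero, hnd]
    have h4 : l.length = S₀.card := by
      rw [hl, List.length_map, Finset.length_toList]
    rw [h4]
    exact lt_of_le_of_lt h1 (h2.trans_eq h3)
  have hq0 : q = 0 := poly_eq_zero_of_unit_roots l q hpw hroots hdeg
  have : φ (r.coeff k) = 0 := by
    rw [← Polynomial.coeff_map, ← hq, hq0, Polynomial.coeff_zero]
  rw [hφ] at this
  simp only [Int.coe_castRingHom] at this
  have := (ZMod.intCast_zmod_eq_zero_iff_dvd _ _).mp this
  exact_mod_cast this



lemma natCastQ_inj : Function.Injective (fun n : ℕ => (n : ℚ)) :=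
  fun a b h => Nat.cast_injective h

lemma rem_coeff_eq (f : Polynomial ℤ) (S₀ : Finset ℕ) (d : ℕ) (hd : f.natDegree ≤ d) :
    ((f %ₘ ∏ n ∈ S₀, (X - C (n:ℤ))).coeff (S₀.card - 1) : ℚ)
      = ∑ t ∈ Finset.range (d+1), (f.coeff t : ℚ) * Lsum t (S₀.image (fun n : ℕ => (n:ℚ))) := by
  classical
  set S : Finset ℚ := S₀.image (fun n : ℕ => (n:ℚ)) with hS
  set P : Polynomial ℤ := ∏ n ∈ S₀, (X - C (n:ℤ)) with hP
  have hPm : P.Monic := monic_prod_of_monic _ _ (fun n _ => monic_X_sub_C _)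
  have hPnd : P.natDegree = S₀.card := by
    rw [hP, Polynomial.natDegree_prod _ _ (fun n _ => Polynomial.X_sub_C_ne_zero _)]
    simp only [Polynomial.natDegree_X_sub_C]
    exact (Finset.card_eq_sum_ones S₀).symm
  have hScard : S.card = S₀.card := Finset.card_image_of_injective _ natCastQ_inj
  set φ : ℤ →+* ℚ := Int.castRingHom ℚ with hφ
  set fQ : Polynomial ℚ := f.map φ with hfQ
  set rQ : Polynomial ℚ := (f %ₘ P).map φ with hrQ
  have hmap : rQ = fQ %ₘ (P.map φ) := Polynomial.map_modByMonic φ hPm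
  have hPQm : (P.map φ).Monic := hPm.map φ
  have hPQe : ∀ i ∈ S, (P.map φ).eval i = 0 := by
    intro i hi
    obtain ⟨n, hn, rfl⟩ := Finset.mem_image.mp hi
    rw [hP, Polynomial.map_prod, Polynomial.eval_prod]
    refine Finset.prod_eq_zero hn ?_
    simp
  have hdeg : rQ.degree < (S.card : WithBot ℕ) := by
    have h1 : rQ.degree ≤ (f %ₘ P).degree := Polynomial.degree_map_le
    have h2 : (f %ₘ P).degree < P.degree := Polynomial.degree_modByMonic_lt f hPm
    have h3 : P.degree = (S₀.card : WithBot ℕ) := by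
      rw [Polynomial.degree_eq_natDegree hPm.ne_zero, hPnd]
    rw [hScard]
    exact lt_of_le_of_lt h1 (h2.trans_eq h3)
  have hinj : Set.InjOn (id : ℚ → ℚ) S := Function.injective_id.injOn
  have hevals : ∀ i ∈ S, rQ.eval (id i) = fQ.eval i := by
    intro i hi
    simp only [id_eq]
    rw [hmap, Polynomial.modByMonic_eq_sub_mul_div fQ (P.map φ), Polynomial.eval_sub,
      Polynomial.eval_mul, hPQe i hi, zero_mul, sub_zero]
  have hinterp : rQ = Lagrange.interpolate S id (fun i => fQ.eval i) :=
    Lagrange.eq_interpolate_of_eval_eq (r := fun i => fQ.eval i) hinj hdeg hevals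
  have hco : rQ.coeff (S.card - 1) = ∑ i ∈ S, fQ.eval i * qw S i := by
    rw [hinterp, coeff_interpolate]
  have hlhs : rQ.coeff (S.card - 1) = ((f %ₘ P).coeff (S₀.card - 1) : ℚ) := by
    rw [hrQ, Polynomial.coeff_map, hScard, hφ]
    simp
  have hfQnd : fQ.natDegree < d + 1 := lt_of_le_of_lt (Polynomial.natDegree_map_le)
    (by omega)
  have hrhs : ∑ i ∈ S, fQ.eval i * qw S i
      = ∑ t ∈ Finset.range (d+1), (f.coeff t : ℚ) * Lsum t S := by
    have heval : ∀ i : ℚ, fQ.eval i = ∑ t ∈ Finset.range (d+1), (f.coeff t : ℚ) * i ^ t := by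
      intro i
      rw [Polynomial.eval_eq_sum_range' hfQnd]
      refine Finset.sum_congr rfl fun t _ => ?_
      rw [hfQ, Polynomial.coeff_map, hφ]
      simp
    calc ∑ i ∈ S, fQ.eval i * qw S i
        = ∑ i ∈ S, ∑ t ∈ Finset.range (d+1), (f.coeff t : ℚ) * i ^ t * qw S i := by
          refine Finset.sum_congr rfl fun i _ => ?_
          rw [heval i, Finset.sum_mul]
      _ = ∑ t ∈ Finset.range (d+1), ∑ i ∈ S, (f.coeff t : ℚ) * i ^ t * qw S i :=
          Finset.sum_comm
      _ = ∑ t ∈ Finset.range (d+1), (f.coeff t : ℚ) * Lsum t S := by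
          refine Finset.sum_congr rfl fun t _ => ?_
          rw [Lsum, Finset.mul_sum]
          exact Finset.sum_congr rfl fun i _ => by ring
  rw [← hlhs, hco, hrhs]



lemma no_int_root {f : Polynomial ℤ} (hirr : Irreducible f) (hdeg : 2 ≤ f.natDegree) (n : ℤ) :
    f.eval n ≠ 0 := by
  intro h
  obtain ⟨g, hg⟩ := Polynomial.dvd_iff_isRoot.mpr h
  rcases hirr.isUnit_or_isUnit hg with hu | hu
  · exact Polynomial.not_isUnit_X_sub_C n hu
  · have hf0 : f ≠ 0 := hirr.ne_zero
    have hg0 : g ≠ 0 := by rintro rfl; rw [mul_zero] at hg; exact hf0 hg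
    have h1 : f.natDegree = 1 + g.natDegree := by
      rw [hg, Polynomial.natDegree_mul (Polynomial.X_sub_C_ne_zero n) hg0,
        Polynomial.natDegree_X_sub_C]
    rw [Polynomial.natDegree_eq_zero_of_isUnit hu] at h1
    omega

theorem sah_prime_power_bound (f : Polynomial ℤ) (d : ℕ) (hirr : Irreducible f)
    (hdeg : f.natDegree = d) (hd : 2 ≤ d) :
    ∃ c : ℝ, 0 < c ∧ ∀ N : ℕ, 2 ≤ N → ∀ p : ℕ, p.Prime → c * N < (p : ℝ) →
      ∀ ν : ℕ, 1 ≤ ν →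
        ((Finset.Icc 1 N).filter fun n : ℕ => (p : ℤ) ^ ν ∣ f.eval (n : ℤ)).card ≤
          d - ν := by
  classical
  set A : ℤ := ∑ t ∈ Finset.range (d+1), |f.coeff t| with hA
  have hfne : f ≠ 0 := hirr.ne_zero
  have hlead : 1 ≤ |f.coeff d| := by
    have h : f.coeff d ≠ 0 := by
      rw [← hdeg]
      exact Polynomial.leadingCoeff_ne_zero.mpr hfne
    exact Int.one_le_abs (by exact_mod_cast h)
  have hA1 : 1 ≤ A := by
    rw [hA]
    exact le_trans hlead (Finset.single_le_sum (f := fun t => |f.coeff t|)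
      (fun t _ => abs_nonneg _) (Finset.self_mem_range_succ d))
  have hAQ1 : (1:ℚ) ≤ (A:ℚ) := by exact_mod_cast hA1
  have hAR1 : (1:ℝ) ≤ (A:ℝ) := by exact_mod_cast hA1
  set c : ℝ := 2^(d*d+d+1) * (A:ℝ)^(d+2) with hc
  have hc1 : (1:ℝ) ≤ c := by
    have h1 : (1:ℝ) ≤ 2^(d*d+d+1) := one_le_pow₀ (by norm_num)
    have h2 : (1:ℝ) ≤ (A:ℝ)^(d+2) := one_le_pow₀ hAR1
    calc (1:ℝ) = 1 * 1 := by norm_num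
      _ ≤ 2^(d*d+d+1) * (A:ℝ)^(d+2) := mul_le_mul h1 h2 (by norm_num) (by positivity)
  refine ⟨c, lt_of_lt_of_le one_pos hc1, ?_⟩
  intro N hN p hp hpc ν hν
  by_contra hcon
  push_neg at hcon
  set F := (Finset.Icc 1 N).filter (fun n : ℕ => (p : ℤ) ^ ν ∣ f.eval (n : ℤ)) with hF
  set μ := min ν d with hμ
  have hμν : μ ≤ ν := min_le_left _ _
  have hμd : μ ≤ d := min_le_right _ _
  have hμ1 : 1 ≤ μ := le_min hν (by omega)
  set m := d + 1 - μ with hm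
  have hm1 : 1 ≤ m := by omega
  have hmμd : m - 1 + μ = d := by omega
  have hdsub : d - ν = d - μ := by
    rcases min_eq_iff.mp hμ.symm with ⟨h, _⟩ | ⟨h, _⟩ <;> omega
  have hmcard : m ≤ F.card := by omega
  obtain ⟨S₀, hS₀sub, hS₀card⟩ := Finset.exists_subset_card_eq hmcard
  have hmem : ∀ n ∈ S₀, (1 ≤ n ∧ n ≤ N) ∧ (p:ℤ)^ν ∣ f.eval (n:ℤ) := by
    intro n hn
    have := Finset.mem_filter.mp (hS₀sub hn)
    exact ⟨Finset.mem_Icc.mp this.1, this.2⟩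
  -- p > N
  have hNp : (N:ℝ) < (p:ℝ) := by
    calc (N:ℝ) = 1 * N := (one_mul _).symm
      _ ≤ c * N := by
        apply mul_le_mul_of_nonneg_right hc1 (by positivity)
      _ < p := hpc
  have hNpn : N < p := by exact_mod_cast hNp
  have hdist : ∀ a ∈ S₀, ∀ b ∈ S₀, a ≠ b → ¬ ((p:ℤ) ∣ (a:ℤ) - (b:ℤ)) := by
    intro a ha b hb hab hdvd'
    have ha' := (hmem a ha).1
    have hb' := (hmem b hb).1
    have habz : (a:ℤ) - (b:ℤ) ≠ 0 := by
      intro h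
      exact hab (by exact_mod_cast sub_eq_zero.mp h)
    have := Int.le_of_dvd (abs_pos.mpr habz) ((dvd_abs _ _).mpr hdvd')
    have habs : |(a:ℤ) - (b:ℤ)| ≤ (N:ℤ) - 1 := by
      rw [abs_le]
      omega
    omega
  have hdvdμ : ∀ n ∈ S₀, (p:ℤ)^μ ∣ f.eval (n:ℤ) :=
    fun n hn => dvd_trans (pow_dvd_pow _ hμν) (hmem n hn).2
  set D : ℤ := (f %ₘ ∏ n ∈ S₀, (X - C (n:ℤ))).coeff (m - 1) with hD
  have hDdvd : (p:ℤ)^μ ∣ D := rem_coeff_dvd f S₀ p hp μ (by omega) hdist hdvdμ (m-1)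
  set S : Finset ℚ := S₀.image (fun n : ℕ => (n:ℚ)) with hSdef
  have hScard : S.card = m := by
    rw [hSdef, Finset.card_image_of_injective _ (fun a b h => by exact_mod_cast h), hS₀card]
  have hDQ : (D:ℚ) = ∑ t ∈ Finset.range (d+1), (f.coeff t : ℚ) * Lsum t S := by
    have h := rem_coeff_eq f S₀ d (le_of_eq hdeg)
    rw [hS₀card] at h
    exact h
  have hzS : ∀ z ∈ S, 1 ≤ z ∧ z ≤ (N:ℚ) := by
    intro z hz
    obtain ⟨n, hn, rfl⟩ := Finset.mem_image.mp hz
    have := (hmem n hn).1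
    constructor <;> [exact_mod_cast this.1; exact_mod_cast this.2]
  have hzS0 : ∀ z ∈ S, 0 ≤ z := fun z hz => le_trans zero_le_one (hzS z hz).1
  have hS₀ne : S₀.Nonempty := Finset.card_pos.mp (by omega)
  set n₁ : ℕ := S₀.max' hS₀ne with hn₁
  set M : ℚ := (n₁:ℚ) with hM
  have hMmem : M ∈ S := Finset.mem_image.mpr ⟨n₁, S₀.max'_mem hS₀ne, rfl⟩
  have hM1 : 1 ≤ M := (hzS M hMmem).1
  have hMN : M ≤ (N:ℚ) := (hzS M hMmem).2
  have hMmax : ∀ z ∈ S, z ≤ M := by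
    intro z hz
    obtain ⟨n, hn, rfl⟩ := Finset.mem_image.mp hz
    rw [hM]
    exact_mod_cast S₀.le_max' n hn
  have hNQ1 : (1:ℚ) ≤ (N:ℚ) := by exact_mod_cast (by omega : 1 ≤ N)
  -- Step 3 : D = 0
  have hD0 : D = 0 := by
    by_contra hD0
    have h1 : (p:ℤ)^μ ≤ |D| := Int.le_of_dvd (abs_pos.mpr hD0) ((dvd_abs _ _).mpr hDdvd)
    have h2 : |(D:ℚ)| ≤ 2^(d+1) * (A:ℚ) * (N:ℚ)^μ := by
      rw [hDQ]
      calc |∑ t ∈ Finset.range (d+1), (f.coeff t : ℚ) * Lsum t S|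
          ≤ ∑ t ∈ Finset.range (d+1), |(f.coeff t : ℚ) * Lsum t S| :=
            Finset.abs_sum_le_sum_abs _ _
        _ ≤ ∑ t ∈ Finset.range (d+1), |(f.coeff t : ℚ)| * (2^(d+1) * (N:ℚ)^μ) := by
            refine Finset.sum_le_sum fun t ht => ?_
            rw [abs_mul]
            refine mul_le_mul_of_nonneg_left ?_ (abs_nonneg _)
            have htd : t ≤ d := by
              have := Finset.mem_range.mp ht; omega
            have hnn := lsum_nonneg hzS0 t
            rw [abs_of_nonneg hnn]
            calc Lsum t S ≤ 2^(t+1) * (N:ℚ)^(t+1-S.card) :=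
                  lsum_upper hNQ1 (fun z hz => ⟨hzS0 z hz, (hzS z hz).2⟩) t
              _ ≤ 2^(d+1) * (N:ℚ)^μ := by
                  refine mul_le_mul (pow_le_pow_right₀ (by norm_num) (by omega)) ?_
                    (by positivity) (by positivity)
                  refine pow_le_pow_right₀ hNQ1 ?_
                  rw [hScard]
                  omega
        _ = (∑ t ∈ Finset.range (d+1), |(f.coeff t : ℚ)|) * (2^(d+1) * (N:ℚ)^μ) := by
            rw [Finset.sum_mul]
        _ = (A:ℚ) * (2^(d+1) * (N:ℚ)^μ) := by
            congr 1
            rw [hA]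
            push_cast
            rfl
        _ = 2^(d+1) * (A:ℚ) * (N:ℚ)^μ := by ring
    -- move to ℝ
    have h3 : (p:ℝ)^μ ≤ 2^(d+1) * (A:ℝ) * (N:ℝ)^μ := by
      have h1' : (p:ℚ)^μ ≤ |(D:ℚ)| := by
        rw [← abs_of_nonneg (show (0:ℤ) ≤ (p:ℤ)^μ by positivity)] at h1
        exact_mod_cast h1
      have := le_trans h1' h2
      exact_mod_cast this
    have h4 : 2^(d+1) * (A:ℝ) * (N:ℝ)^μ < (p:ℝ)^μ := by
      have hcN : 0 ≤ c * N := by positivity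
      have hlt : (c * N)^μ < (p:ℝ)^μ := by
        apply pow_lt_pow_left₀ hpc hcN (by omega)
      calc 2^(d+1) * (A:ℝ) * (N:ℝ)^μ
          ≤ c * (N:ℝ)^μ := by
            apply mul_le_mul_of_nonneg_right ?_ (by positivity)
            rw [hc]
            have e1 : (2:ℝ)^(d+1) ≤ 2^(d*d+d+1) := pow_le_pow_right₀ (by norm_num) (by nlinarith)
            have e2 : (A:ℝ) ≤ (A:ℝ)^(d+2) := le_self_pow₀ hAR1 (by omega)
            exact mul_le_mul e1 e2 (by positivity) (by positivity)
        _ ≤ c^μ * (N:ℝ)^μ := by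
            apply mul_le_mul_of_nonneg_right (le_self_pow₀ hc1 (by omega)) (by positivity)
        _ = (c * N)^μ := (mul_pow _ _ _).symm
        _ < (p:ℝ)^μ := hlt
    exact absurd h3 (not_le.mpr h4)
  -- Step 4 : M ≤ 2^d * A
  have hMbound : M ≤ 2^d * (A:ℚ) := by
    have hsum : ∑ t ∈ Finset.range d, (f.coeff t : ℚ) * Lsum t S
        + (f.coeff d : ℚ) * Lsum d S = 0 := by
      have := hDQ
      rw [hD0] at this
      rw [← Finset.sum_range_succ]
      exact_mod_cast this.symm
    have hlow : M^μ ≤ Lsum d S := by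
      have h := lsum_lower_aux m S M hScard hMmem hzS0 μ
      rwa [hmμd] at h
    have hup : |∑ t ∈ Finset.range d, (f.coeff t : ℚ) * Lsum t S|
        ≤ (A:ℚ) * (2^d * M^(μ-1)) := by
      calc |∑ t ∈ Finset.range d, (f.coeff t : ℚ) * Lsum t S|
          ≤ ∑ t ∈ Finset.range d, |(f.coeff t : ℚ) * Lsum t S| :=
            Finset.abs_sum_le_sum_abs _ _
        _ ≤ ∑ t ∈ Finset.range d, |(f.coeff t : ℚ)| * (2^d * M^(μ-1)) := by
            refine Finset.sum_le_sum fun t ht => ?_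
            rw [abs_mul]
            refine mul_le_mul_of_nonneg_left ?_ (abs_nonneg _)
            have htd : t < d := Finset.mem_range.mp ht
            rw [abs_of_nonneg (lsum_nonneg hzS0 t)]
            calc Lsum t S ≤ 2^(t+1) * M^(t+1-S.card) :=
                  lsum_upper hM1 (fun z hz => ⟨hzS0 z hz, hMmax z hz⟩) t
              _ ≤ 2^d * M^(μ-1) := by
                  refine mul_le_mul (pow_le_pow_right₀ (by norm_num) (by omega)) ?_
                    (by positivity) (by positivity)
                  refine pow_le_pow_right₀ hM1 ?_
                  rw [hScard]
                  omega
        _ ≤ (A:ℚ) * (2^d * M^(μ-1)) := by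
            rw [← Finset.sum_mul]
            apply mul_le_mul_of_nonneg_right ?_ (by positivity)
            have : ∑ t ∈ Finset.range d, |(f.coeff t : ℚ)| ≤ ∑ t ∈ Finset.range (d+1), |(f.coeff t : ℚ)| := by
              apply Finset.sum_le_sum_of_subset_of_nonneg
              · exact Finset.range_subset_range.mpr (by omega)
              · intro t _ _; exact abs_nonneg _
            calc ∑ t ∈ Finset.range d, |(f.coeff t : ℚ)| ≤ ∑ t ∈ Finset.range (d+1), |(f.coeff t : ℚ)| := this
              _ = (A:ℚ) := by rw [hA]; push_cast; rfl
    have hkey : M^μ ≤ (A:ℚ) * (2^d * M^(μ-1)) := by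
      have h1 : (f.coeff d : ℚ) * Lsum d S = -∑ t ∈ Finset.range d, (f.coeff t : ℚ) * Lsum t S := by
        linarith [hsum]
      have h2 : Lsum d S ≤ |(f.coeff d : ℚ)| * Lsum d S := by
        apply le_mul_of_one_le_left (lsum_nonneg hzS0 d)
        exact_mod_cast hlead
      calc M^μ ≤ Lsum d S := hlow
        _ ≤ |(f.coeff d : ℚ)| * Lsum d S := h2
        _ = |(f.coeff d : ℚ) * Lsum d S| := by
            rw [abs_mul, abs_of_nonneg (lsum_nonneg hzS0 d)]
        _ = |∑ t ∈ Finset.range d, (f.coeff t : ℚ) * Lsum t S| := by rw [h1, abs_neg]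
        _ ≤ (A:ℚ) * (2^d * M^(μ-1)) := hup
    have hsplit : M^μ = M * M^(μ-1) := by
      rw [← pow_succ']
      congr 1
      omega
    rw [hsplit] at hkey
    have hpowpos : (0:ℚ) < M^(μ-1) := by positivity
    have := le_of_mul_le_mul_right (by linarith [hkey] : M * M^(μ-1) ≤ (2^d * (A:ℚ)) * M^(μ-1)) hpowpos
    exact this
  -- Step 5 : contradiction
  have hroot : f.eval (n₁:ℤ) ≠ 0 := no_int_root hirr (by omega) _
  have hn₁S₀ : n₁ ∈ S₀ := S₀.max'_mem hS₀ne
  have hpdvd : (p:ℤ) ∣ f.eval (n₁:ℤ) :=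
    dvd_trans (dvd_pow_self _ (by omega : ν ≠ 0)) (hmem n₁ hn₁S₀).2
  have h5 : (p:ℤ) ≤ |f.eval (n₁:ℤ)| := Int.le_of_dvd (abs_pos.mpr hroot) ((dvd_abs _ _).mpr hpdvd)
  have hevalb : |((f.eval (n₁:ℤ) : ℤ) : ℚ)| ≤ (A:ℚ) * (2^d * (A:ℚ))^d := by
    have hevalZ : f.eval ((n₁:ℕ):ℤ) = ∑ t ∈ Finset.range (d+1), f.coeff t * ((n₁:ℕ):ℤ)^t :=
      Polynomial.eval_eq_sum_range' (by omega : f.natDegree < d + 1) _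
    have heval : ((f.eval (n₁:ℤ) : ℤ) : ℚ) = ∑ t ∈ Finset.range (d+1), (f.coeff t : ℚ) * M^t := by
      rw [hM, hevalZ]
      push_cast
      rfl
    rw [heval]
    have hK1 : (1:ℚ) ≤ 2^d * (A:ℚ) := by
      calc (1:ℚ) = 1 * 1 := by norm_num
        _ ≤ 2^d * (A:ℚ) := mul_le_mul (one_le_pow₀ (by norm_num)) hAQ1 (by norm_num) (by positivity)
    calc |∑ t ∈ Finset.range (d+1), (f.coeff t : ℚ) * M^t|
        ≤ ∑ t ∈ Finset.range (d+1), |(f.coeff t : ℚ) * M^t| := Finset.abs_sum_le_sum_abs _ _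
      _ ≤ ∑ t ∈ Finset.range (d+1), |(f.coeff t : ℚ)| * (2^d * (A:ℚ))^d := by
          refine Finset.sum_le_sum fun t ht => ?_
          rw [abs_mul]
          refine mul_le_mul_of_nonneg_left ?_ (abs_nonneg _)
          have htd : t ≤ d := by have := Finset.mem_range.mp ht; omega
          rw [abs_of_nonneg (by positivity : (0:ℚ) ≤ M^t)]
          calc M^t ≤ (2^d * (A:ℚ))^t := pow_le_pow_left₀ (by positivity) hMbound t
            _ ≤ (2^d * (A:ℚ))^d := pow_le_pow_right₀ hK1 htd
      _ = (A:ℚ) * (2^d * (A:ℚ))^d := by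
          rw [← Finset.sum_mul]
          congr 1
          rw [hA]; push_cast; rfl
  have h6 : (p:ℝ) ≤ (A:ℝ) * (2^d * (A:ℝ))^d := by
    have h5' : (p:ℚ) ≤ |((f.eval (n₁:ℤ) : ℤ) : ℚ)| := by exact_mod_cast h5
    have := le_trans h5' hevalb
    exact_mod_cast this
  have h7 : (A:ℝ) * (2^d * (A:ℝ))^d < (p:ℝ) := by
    have hcN2 : c ≤ c * N := by
      calc c = c * 1 := (mul_one c).symm
        _ ≤ c * N := by
          apply mul_le_mul_of_nonneg_left ?_ (by positivity)
          exact_mod_cast (by omega : 1 ≤ N)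
    have hcb : (A:ℝ) * (2^d * (A:ℝ))^d ≤ c := by
      rw [hc, mul_pow, ← pow_mul]
      have e0 : (A:ℝ) * ((2:ℝ)^(d*d) * (A:ℝ)^d) = 2^(d*d) * (A:ℝ)^(d+1) := by ring
      rw [e0]
      have e1 : (2:ℝ)^(d*d) ≤ 2^(d*d+d+1) := pow_le_pow_right₀ (by norm_num) (by omega)
      have e2 : (A:ℝ)^(d+1) ≤ (A:ℝ)^(d+2) := pow_le_pow_right₀ hAR1 (by omega)
      exact mul_le_mul e1 e2 (by positivity) (by positivity)
    linarith
  linarith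
end

section
/- Fix an integer η ≥ 1. There exists a constant C > 0 (depending only on η) with the following property: whenever N ≥ 1, p is a prime, 1 ≤ n₁ < n₂ < … < n_s ≤ N are integers, ν₁ ≥ ν₂ ≥ … ≥ ν_s ≥ 1 are integers satisfying n_i^(2^η) + 1 ≡ 0 (mod p^{ν_i}) for every 1 ≤ i ≤ s, and there exists an index r ∈ {1, …, s} with r ≥ ⌊2^(η−1)/2^(⌊log₂ ν_r⌋)⌋ + 1, then p ≤ C·N. -/
/-- In `ZMod (p ^ ν)`, if a sum of two elements is a unit then one of them is a unit
(nonunits are exactly the multiples of `p`). -/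
private lemma zmod_isUnit_or {p ν : ℕ} (hp : p.Prime) (hν : 0 < ν)
    (a b : ZMod (p ^ ν)) (h : IsUnit (a + b)) : IsUnit a ∨ IsUnit b := by
  haveI : NeZero (p ^ ν) := ⟨pow_ne_zero _ hp.pos.ne'⟩
  by_contra hc
  push_neg at hc
  obtain ⟨ha, hb⟩ := hc
  have key : ∀ z : ZMod (p ^ ν), ¬ IsUnit z → p ∣ z.val := by
    intro z hz
    rw [← ZMod.natCast_zmod_val z, ZMod.isUnit_iff_coprime] at hz
    by_contra hdvd
    exact hz (Nat.Coprime.pow_right _ ((Nat.Prime.coprime_iff_not_dvd hp).mpr hdvd).symm)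
  have hpa := key a ha
  have hpb := key b hb
  have hsum : p ∣ (a + b).val := by
    rw [ZMod.val_add]
    exact (Nat.dvd_mod_iff (dvd_pow_self p hν.ne')).mpr (Nat.dvd_add hpa hpb)
  have hcop : Nat.Coprime ((a + b).val) (p ^ ν) := by
    rwa [← ZMod.natCast_zmod_val (a + b), ZMod.isUnit_iff_coprime] at h
  have hd1 : p ∣ 1 := hcop ▸ Nat.dvd_gcd hsum (dvd_pow_self p hν.ne')
  exact hp.one_lt.ne' (Nat.dvd_one.mp hd1)

/-- Square roots in `ZMod (p ^ ν)` for odd `p`: if `y ^ 2 = x ^ 2` with `x` a unit,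
then `y = x` or `y = -x`. -/
private lemma sq_eq_sq_zmod {p ν : ℕ} (hp : p.Prime) (hp2 : p ≠ 2) (hν : 0 < ν)
    {x y : ZMod (p ^ ν)} (hx : IsUnit x) (h : y ^ 2 = x ^ 2) : y = x ∨ y = -x := by
  haveI : NeZero (p ^ ν) := ⟨pow_ne_zero _ hp.pos.ne'⟩
  have h2 : IsUnit (2 : ZMod (p ^ ν)) := by
    have : IsUnit ((2 : ℕ) : ZMod (p ^ ν)) := by
      rw [ZMod.isUnit_iff_coprime]
      exact ((Nat.coprime_primes Nat.prime_two hp).mpr (Ne.symm hp2)).pow_right ν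
    simpa using this
  have hzero : (x - y) * (x + y) = 0 := by linear_combination -h
  have hsumu : IsUnit ((x - y) + (x + y)) := by
    have he : (x - y) + (x + y) = 2 * x := by ring
    rw [he]; exact h2.mul hx
  rcases zmod_isUnit_or hp hν _ _ hsumu with hu | hu
  · right
    have h0 := (IsUnit.mul_right_eq_zero hu).mp hzero
    have : y = -x := by linear_combination h0
    exact this
  · left
    have h0 := (IsUnit.mul_left_eq_zero hu).mp hzero
    have : y = x := by linear_combination -h0
    exact this

/-- The number of `2 ^ k`-th roots of a unit `c` in `ZMod (p ^ ν)`, `p` an odd prime,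
is at most `2 ^ k`. -/
private lemma card_pow_roots {p ν : ℕ} [NeZero (p ^ ν)] (hp : p.Prime) (hp2 : p ≠ 2)
    (hν : 0 < ν) (k : ℕ) (c : ZMod (p ^ ν)) (hc : IsUnit c) :
    (Finset.univ.filter (fun y : ZMod (p ^ ν) => y ^ 2 ^ k = c)).card ≤ 2 ^ k := by
  induction k with
  | zero =>
    simp only [pow_zero, pow_one]
    have : (Finset.univ.filter (fun y : ZMod (p ^ ν) => y = c)) ⊆ {c} := by
      intro y hy
      simp only [Finset.mem_filter] at hy
      simp [hy.2]
    simpa using Finset.card_le_card this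
  | succ k ih =>
    set s := Finset.univ.filter (fun y : ZMod (p ^ ν) => y ^ 2 ^ (k + 1) = c) with hs
    have himg : s.image (fun y => y ^ 2) ⊆
        Finset.univ.filter (fun w : ZMod (p ^ ν) => w ^ 2 ^ k = c) := by
      intro w hw
      obtain ⟨y, hy, rfl⟩ := Finset.mem_image.mp hw
      simp only [hs, Finset.mem_filter, Finset.mem_univ, true_and] at hy ⊢
      rw [← pow_mul, ← pow_succ']
      exact hy
    have hfib : ∀ b ∈ s.image (fun y => y ^ 2),
        (s.filter (fun y => y ^ 2 = b)).card ≤ 2 := by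
      intro b hb
      obtain ⟨y₀, hy₀, rfl⟩ := Finset.mem_image.mp hb
      have hy₀c : y₀ ^ 2 ^ (k + 1) = c := by
        simpa only [hs, Finset.mem_filter, Finset.mem_univ, true_and] using hy₀
      have hy₀u : IsUnit y₀ := by
        have : IsUnit (y₀ ^ 2 ^ (k + 1)) := by rw [hy₀c]; exact hc
        exact (isUnit_pow_iff (by positivity)).mp this
      have hsub : s.filter (fun y => y ^ 2 = y₀ ^ 2) ⊆ {y₀, -y₀} := by
        intro y hy
        have hyy := (Finset.mem_filter.mp hy).2
        rcases sq_eq_sq_zmod hp hp2 hν hy₀u hyy with h | h <;> simp [h]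
      calc (s.filter (fun y => y ^ 2 = y₀ ^ 2)).card
          ≤ ({y₀, -y₀} : Finset (ZMod (p ^ ν))).card := Finset.card_le_card hsub
        _ ≤ 2 := by simpa using Finset.card_insert_le y₀ ({-y₀} : Finset (ZMod (p ^ ν)))
    calc s.card ≤ 2 * (s.image (fun y => y ^ 2)).card :=
          Finset.card_le_mul_card_image s 2 hfib
      _ ≤ 2 * 2 ^ k := Nat.mul_le_mul_left 2 ((Finset.card_le_card himg).trans ih)
      _ = 2 ^ (k + 1) := (pow_succ' 2 k).symm

theorem baier_dey_congruence_system (η : ℕ) (hη : 1 ≤ η) :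
    ∃ C : ℝ, 0 < C ∧ ∀ N : ℕ, 1 ≤ N → ∀ p : ℕ, p.Prime →
      ∀ s : ℕ, ∀ n ν : ℕ → ℕ,
        (∀ i ∈ Finset.Icc 1 s, 1 ≤ n i ∧ n i ≤ N) →
        (∀ i ∈ Finset.Icc 1 s, ∀ j ∈ Finset.Icc 1 s, i < j → n i < n j) →
        (∀ i ∈ Finset.Icc 1 s, ∀ j ∈ Finset.Icc 1 s, i ≤ j → ν j ≤ ν i) →
        (∀ i ∈ Finset.Icc 1 s, 1 ≤ ν i) →
        (∀ i ∈ Finset.Icc 1 s, p ^ ν i ∣ n i ^ 2 ^ η + 1) →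
        (∃ r ∈ Finset.Icc 1 s, 2 ^ (η - 1) / 2 ^ Nat.log 2 (ν r) + 1 ≤ r) →
        (p : ℝ) ≤ C * N := by
  refine ⟨2, by norm_num, ?_⟩
  intro N hN p hp s n ν hn hmono hνmono hν1 hdvd hex
  obtain ⟨r, hr, hrge⟩ := hex
  suffices hnat : p ≤ 2 * N by exact_mod_cast hnat
  obtain ⟨hr1, hrs⟩ := Finset.mem_Icc.mp hr
  set t := Nat.log 2 (ν r) with ht
  have hνr1 : 1 ≤ ν r := hν1 r hr
  have hνrt : 2 ^ t ≤ ν r := Nat.pow_log_le_self 2 (by omega)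
  have hppos : 0 < p := hp.pos
  have hNpos : 0 < N := hN
  rcases eq_or_ne p 2 with rfl | hp2
  · omega
  by_cases htη : η ≤ t
  · -- here ν r ≥ 2 ^ η, use a single congruence
    have h1 : p ^ ν r ∣ n r ^ 2 ^ η + 1 := hdvd r hr
    have hle : 2 ^ η ≤ ν r := le_trans (Nat.pow_le_pow_right (by norm_num) htη) hνrt
    have h2 : p ^ 2 ^ η ≤ n r ^ 2 ^ η + 1 :=
      le_trans (Nat.pow_le_pow_right hppos hle) (Nat.le_of_dvd (by positivity) h1)
    have hnN := (hn r hr).2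
    have h3 : n r ^ 2 ^ η + 1 ≤ (2 * N) ^ 2 ^ η := by
      have e1 : n r ^ 2 ^ η ≤ N ^ 2 ^ η := Nat.pow_le_pow_left hnN _
      have e2 : 1 ≤ N ^ 2 ^ η := Nat.one_le_pow _ _ hNpos
      have e3 : 2 ≤ 2 ^ 2 ^ η := Nat.one_lt_two_pow_iff.mpr (by positivity)
      calc n r ^ 2 ^ η + 1 ≤ 2 * N ^ 2 ^ η := by omega
        _ ≤ 2 ^ 2 ^ η * N ^ 2 ^ η := Nat.mul_le_mul_right _ e3
        _ = (2 * N) ^ 2 ^ η := (mul_pow 2 N _).symm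
    exact (Nat.pow_le_pow_iff_left (by positivity)).mp (h2.trans h3)
  · push_neg at htη
    have hD : 2 ^ (η - 1) / 2 ^ t = 2 ^ (η - 1 - t) := Nat.pow_div (by omega) (by norm_num)
    haveI : NeZero (p ^ ν r) := ⟨pow_ne_zero _ hppos.ne'⟩
    have hm : t + 1 + (η - 1 - t) = η := by omega
    have hmem : ∀ i ∈ Finset.Icc 1 r, ((n i : ZMod (p ^ ν r))) ^ 2 ^ η = -1 := by
      intro i hi
      obtain ⟨hi1, hir⟩ := Finset.mem_Icc.mp hi
      have his : i ∈ Finset.Icc 1 s := Finset.mem_Icc.mpr ⟨hi1, hir.trans hrs⟩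
      have hd : p ^ ν r ∣ n i ^ 2 ^ η + 1 :=
        dvd_trans (pow_dvd_pow p (hνmono i his r hr hir)) (hdvd i his)
      have h0 : ((n i ^ 2 ^ η + 1 : ℕ) : ZMod (p ^ ν r)) = 0 :=
        (ZMod.natCast_eq_zero_iff _ _).mpr hd
      push_cast at h0
      exact eq_neg_of_add_eq_zero_left h0
    set S := Finset.univ.filter
      (fun y : ZMod (p ^ ν r) => y ^ 2 ^ (η - 1 - t) = -1) with hS
    have hcardS : S.card ≤ 2 ^ (η - 1 - t) :=
      card_pow_roots hp hp2 (by omega) _ _ isUnit_one.neg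
    have hmaps : ∀ i ∈ Finset.Icc 1 r, ((n i : ZMod (p ^ ν r)) ^ 2 ^ (t + 1)) ∈ S := by
      intro i hi
      simp only [hS, Finset.mem_filter, Finset.mem_univ, true_and]
      rw [← pow_mul, ← pow_add, hm]
      exact hmem i hi
    have hcard : S.card < (Finset.Icc 1 r).card := by
      rw [Nat.card_Icc]
      rw [hD] at hrge
      omega
    obtain ⟨i, hi, j, hj, hij, hfeq⟩ :=
      Finset.exists_ne_map_eq_of_card_lt_of_maps_to hcard hmaps
    have key : ∀ a ∈ Finset.Icc 1 r, ∀ b ∈ Finset.Icc 1 r, a < b →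
        (n a : ZMod (p ^ ν r)) ^ 2 ^ (t + 1) = (n b : ZMod (p ^ ν r)) ^ 2 ^ (t + 1) →
        p ≤ 2 * N := by
      intro a ha b hb hab heq
      obtain ⟨ha1, har⟩ := Finset.mem_Icc.mp ha
      obtain ⟨hb1, hbr⟩ := Finset.mem_Icc.mp hb
      have has : a ∈ Finset.Icc 1 s := Finset.mem_Icc.mpr ⟨ha1, har.trans hrs⟩
      have hbs : b ∈ Finset.Icc 1 s := Finset.mem_Icc.mpr ⟨hb1, hbr.trans hrs⟩
      have hnab : n a < n b := hmono a has b hbs hab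
      have hxa : ((n a : ZMod (p ^ ν r)) ^ 2 ^ t) ^ 2 ^ (η - t) = -1 := by
        rw [← pow_mul, ← pow_add, show t + (η - t) = η by omega]
        exact hmem a ha
      have hxu : IsUnit ((n a : ZMod (p ^ ν r)) ^ 2 ^ t) := by
        have hu : IsUnit (((n a : ZMod (p ^ ν r)) ^ 2 ^ t) ^ 2 ^ (η - t)) := by
          rw [hxa]; exact isUnit_one.neg
        exact (isUnit_pow_iff (by positivity)).mp hu
      have hsq : ((n b : ZMod (p ^ ν r)) ^ 2 ^ t) ^ 2
          = ((n a : ZMod (p ^ ν r)) ^ 2 ^ t) ^ 2 := by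
        rw [← pow_mul, ← pow_mul, show 2 ^ t * 2 = 2 ^ (t + 1) from (pow_succ 2 t).symm]
        exact heq.symm
      have hqle : p ^ ν r ≤ (2 * N) ^ 2 ^ t := by
        have hNa : n a ^ 2 ^ t ≤ N ^ 2 ^ t := Nat.pow_le_pow_left (hn a has).2 _
        have hNb : n b ^ 2 ^ t ≤ N ^ 2 ^ t := Nat.pow_le_pow_left (hn b hbs).2 _
        have e3 : 2 ≤ 2 ^ 2 ^ t := Nat.one_lt_two_pow_iff.mpr (by positivity)
        have hfin : 2 * N ^ 2 ^ t ≤ (2 * N) ^ 2 ^ t := by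
          calc 2 * N ^ 2 ^ t ≤ 2 ^ 2 ^ t * N ^ 2 ^ t := Nat.mul_le_mul_right _ e3
            _ = (2 * N) ^ 2 ^ t := (mul_pow 2 N _).symm
        rcases sq_eq_sq_zmod hp hp2 (by omega) hxu hsq with h | h
        · -- p ^ ν r divides the (positive) difference
          have hmod : (n a ^ 2 ^ t : ℕ) ≡ (n b ^ 2 ^ t : ℕ) [MOD p ^ ν r] := by
            rw [← ZMod.natCast_eq_natCast_iff]
            push_cast
            exact h.symm
          have hdvd' : p ^ ν r ∣ n b ^ 2 ^ t - n a ^ 2 ^ t :=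
            (Nat.modEq_iff_dvd' (Nat.pow_le_pow_left hnab.le _)).mp hmod
          have hpos : 0 < n b ^ 2 ^ t - n a ^ 2 ^ t := by
            have := Nat.pow_lt_pow_left hnab (n := 2 ^ t) (by positivity)
            omega
          have := Nat.le_of_dvd hpos hdvd'
          omega
        · -- p ^ ν r divides the sum
          have h0 : ((n b ^ 2 ^ t + n a ^ 2 ^ t : ℕ) : ZMod (p ^ ν r)) = 0 := by
            push_cast
            rw [h]
            ring
          have hdvd' : p ^ ν r ∣ n b ^ 2 ^ t + n a ^ 2 ^ t :=
            (ZMod.natCast_eq_zero_iff _ _).mp h0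
          have hb0 : 0 < n b := (hn b hbs).1
          have := Nat.le_of_dvd (by positivity) hdvd'
          omega
      have hfinal : p ^ 2 ^ t ≤ (2 * N) ^ 2 ^ t :=
        le_trans (Nat.pow_le_pow_right hppos hνrt) hqle
      exact (Nat.pow_le_pow_iff_left (by positivity)).mp hfinal
    rcases hij.lt_or_gt with hlt | hlt
    · exact key i hi j hj hlt hfeq
    · exact key j hj i hi hlt hfeq.symm
end

section
/- Fix an integer η ≥ 1. Consider all finite nonincreasing sequences of positive integers ν₁ ≥ ν₂ ≥ … ≥ ν_s ≥ 1 with the property that for every index r ∈ {1, …, s} one has r ≤ ⌊2^(η−1)/2^(⌊log₂ ν_r⌋)⌋. Then the maximum of ν₁ + ν₂ + … + ν_s over all such sequences equals η·2^(η−1). -/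
lemma clog_le_of_le_pow {r n : ℕ} (h : r ≤ 2 ^ n) : Nat.clog 2 r ≤ n :=
  (Nat.clog_le_iff_le_pow (by norm_num)).mpr h

lemma sumM (n : ℕ) :
    ∑ r ∈ Finset.Ioc 0 (2 ^ n), (2 ^ (n + 1 - Nat.clog 2 r) - 1) = (n + 1) * 2 ^ n := by
  induction n with
  | zero => rw [show Finset.Ioc 0 (2^0) = {1} from rfl]; simp
  | succ n ih =>
    have hsplit := Finset.sum_Ioc_consecutive (fun r => 2 ^ (n + 2 - Nat.clog 2 r) - 1)
      (Nat.zero_le (2 ^ n)) (Nat.pow_le_pow_right (by norm_num) (Nat.le_succ n))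
    have h1 : ∑ r ∈ Finset.Ioc 0 (2 ^ n), (2 ^ (n + 2 - Nat.clog 2 r) - 1)
        = 2 * ((n + 1) * 2 ^ n) + 2 ^ n := by
      have hc : ∀ r ∈ Finset.Ioc 0 (2 ^ n), 2 ^ (n + 2 - Nat.clog 2 r) - 1
          = 2 * (2 ^ (n + 1 - Nat.clog 2 r) - 1) + 1 := by
        intro r hr
        rw [Finset.mem_Ioc] at hr
        have hcl : Nat.clog 2 r ≤ n := clog_le_of_le_pow hr.2
        have : n + 2 - Nat.clog 2 r = (n + 1 - Nat.clog 2 r) + 1 := by omega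
        rw [this, pow_succ]
        have h2 : 1 ≤ 2 ^ (n + 1 - Nat.clog 2 r) := Nat.one_le_two_pow
        omega
      rw [Finset.sum_congr rfl hc, Finset.sum_add_distrib, ← Finset.mul_sum, ih,
        Finset.sum_const, Nat.card_Ioc, smul_eq_mul, mul_one, Nat.sub_zero]
    have h2 : ∑ r ∈ Finset.Ioc (2 ^ n) (2 ^ (n + 1)), (2 ^ (n + 2 - Nat.clog 2 r) - 1)
        = 2 ^ n := by
      have hc : ∀ r ∈ Finset.Ioc (2 ^ n) (2 ^ (n + 1)), 2 ^ (n + 2 - Nat.clog 2 r) - 1 = 1 := by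
        intro r hr
        rw [Finset.mem_Ioc] at hr
        have h1 : Nat.clog 2 r ≤ n + 1 := clog_le_of_le_pow hr.2
        have h2 : ¬ Nat.clog 2 r ≤ n := fun h => absurd ((Nat.clog_le_iff_le_pow (by norm_num)).mp h) (by omega)
        have : Nat.clog 2 r = n + 1 := by omega
        rw [this, show n + 2 - (n + 1) = 1 by omega]; rfl
      rw [Finset.sum_congr rfl hc, Finset.sum_const, Nat.card_Ioc, smul_eq_mul, mul_one,
        pow_succ]
      omega
    have := hsplit
    simp only [Nat.succ_eq_add_one] at this
    have goal : ∑ r ∈ Finset.Ioc 0 (2 ^ (n+1)), (2 ^ (n + 2 - Nat.clog 2 r) - 1)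
        = (n + 2) * 2 ^ (n + 1) := by
      rw [← this, h1, h2]; ring
    simpa [Nat.succ_eq_add_one, show n + 1 + 1 = n + 2 by ring] using goal

theorem baier_dey_partition_problem (η : ℕ) (hη : 1 ≤ η) :
    IsGreatest
      { S : ℕ | ∃ s : ℕ, ∃ ν : ℕ → ℕ,
          (∀ i ∈ Finset.Icc 1 s, 1 ≤ ν i) ∧
          (∀ i ∈ Finset.Icc 1 s, ∀ j ∈ Finset.Icc 1 s, i ≤ j → ν j ≤ ν i) ∧
          (∀ r ∈ Finset.Icc 1 s, r ≤ 2 ^ (η - 1) / 2 ^ Nat.log 2 (ν r)) ∧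
          S = ∑ i ∈ Finset.Icc 1 s, ν i }
      (η * 2 ^ (η - 1)) := by
  obtain ⟨n, rfl⟩ : ∃ n, η = n + 1 := ⟨η - 1, by omega⟩
  simp only [Nat.add_sub_cancel]
  have hIcc : Finset.Icc 1 (2 ^ n) = Finset.Ioc 0 (2 ^ n) := by
    rw [← Finset.Icc_add_one_left_eq_Ioc]; rfl
  constructor
  · -- membership
    refine ⟨2 ^ n, fun r => 2 ^ (n + 1 - Nat.clog 2 r) - 1, ?_, ?_, ?_, ?_⟩
    · intro i hi
      rw [Finset.mem_Icc] at hi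
      have : Nat.clog 2 i ≤ n := clog_le_of_le_pow hi.2
      have h2 : 2 ^ 1 ≤ 2 ^ (n + 1 - Nat.clog 2 i) :=
        Nat.pow_le_pow_right (by norm_num) (by omega)
      show 1 ≤ 2 ^ (n + 1 - Nat.clog 2 i) - 1
      omega
    · intro i hi j hj hij
      have : Nat.clog 2 i ≤ Nat.clog 2 j := Nat.clog_mono_right 2 hij
      have := Nat.pow_le_pow_right (show 0 < 2 by norm_num)
        (show n + 1 - Nat.clog 2 j ≤ n + 1 - Nat.clog 2 i by omega)
      show 2 ^ (n + 1 - Nat.clog 2 j) - 1 ≤ 2 ^ (n + 1 - Nat.clog 2 i) - 1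
      omega
    · intro r hr
      rw [Finset.mem_Icc] at hr
      have hcl : Nat.clog 2 r ≤ n := clog_le_of_le_pow hr.2
      have hm : 1 ≤ n + 1 - Nat.clog 2 r := by omega
      have hlog : Nat.log 2 (2 ^ (n + 1 - Nat.clog 2 r) - 1) = n - Nat.clog 2 r := by
        apply Nat.log_eq_of_pow_le_of_lt_pow
        · have := Nat.pow_le_pow_right (show 0 < 2 by norm_num)
            (show n - Nat.clog 2 r + 1 ≤ n + 1 - Nat.clog 2 r by omega)
          have h1 : (2:ℕ) ^ (n - Nat.clog 2 r + 1) = 2 * 2 ^ (n - Nat.clog 2 r) := by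
            rw [pow_succ]; ring
          omega
        · have : n - Nat.clog 2 r + 1 = n + 1 - Nat.clog 2 r := by omega
          rw [this]
          have : 1 ≤ 2 ^ (n + 1 - Nat.clog 2 r) := Nat.one_le_two_pow
          omega
      show r ≤ 2 ^ n / 2 ^ Nat.log 2 (2 ^ (n + 1 - Nat.clog 2 r) - 1)
      rw [hlog]
      have hdiv : 2 ^ n / 2 ^ (n - Nat.clog 2 r) = 2 ^ (n - (n - Nat.clog 2 r)) :=
        Nat.pow_div (by omega) (by norm_num)
      rw [hdiv, show n - (n - Nat.clog 2 r) = Nat.clog 2 r by omega]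
      exact Nat.le_pow_clog (b := 2) one_lt_two r
    · rw [hIcc, sumM]
  · -- upper bound
    rintro S ⟨s, ν, hpos, -, hcond, rfl⟩
    have key : ∀ r ∈ Finset.Icc 1 s, ν r ≤ 2 ^ (n + 1 - Nat.clog 2 r) - 1 ∧ r ≤ 2 ^ n := by
      intro r hr
      have hr' := Finset.mem_Icc.mp hr
      have hν := hpos r hr
      have hc := hcond r hr
      set k := Nat.log 2 (ν r) with hk
      have hmul : r * 2 ^ k ≤ 2 ^ n := by
        rw [Nat.le_div_iff_mul_le (pow_pos (by norm_num) k)] at hc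
        exact hc
      have h2k : 2 ^ k ≤ 2 ^ n := le_trans (Nat.le_mul_of_pos_left _ (by omega)) hmul
      have hkn : k ≤ n := (Nat.pow_le_pow_iff_right (by norm_num)).mp h2k
      have hrle : r ≤ 2 ^ (n - k) := by
        have : r * 2 ^ k ≤ 2 ^ (n - k) * 2 ^ k := by
          rw [← pow_add, show n - k + k = n by omega]; exact hmul
        exact Nat.le_of_mul_le_mul_right this (pow_pos (by norm_num) k)
      have hclog : Nat.clog 2 r ≤ n - k := clog_le_of_le_pow hrle
      constructor
      · have hlt : ν r < 2 ^ (k + 1) := Nat.lt_pow_succ_log_self (by norm_num) _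
        have : 2 ^ (k + 1) ≤ 2 ^ (n + 1 - Nat.clog 2 r) :=
          Nat.pow_le_pow_right (by norm_num) (by omega)
        omega
      · exact le_trans hrle (Nat.pow_le_pow_right (by norm_num) (by omega))
    have hsub : Finset.Icc 1 s ⊆ Finset.Icc 1 (2 ^ n) := by
      intro r hr
      rw [Finset.mem_Icc] at hr ⊢
      exact ⟨hr.1, (key r (Finset.mem_Icc.mpr hr)).2⟩
    calc ∑ i ∈ Finset.Icc 1 s, ν i
        ≤ ∑ i ∈ Finset.Icc 1 s, (2 ^ (n + 1 - Nat.clog 2 i) - 1) :=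
          Finset.sum_le_sum (fun i hi => (key i hi).1)
      _ ≤ ∑ i ∈ Finset.Icc 1 (2 ^ n), (2 ^ (n + 1 - Nat.clog 2 i) - 1) :=
          Finset.sum_le_sum_of_subset hsub
      _ = (n + 1) * 2 ^ n := by rw [hIcc, sumM]
end

section
/- Let f ∈ ℤ[X] be a monic irreducible polynomial of even degree d ≥ 2 which is even, i.e., f(−X) = f(X). Then there is a threshold N₀ such that for every integer N ≥ N₀ one has L_f(N)^(d/2) ≥ Π_{p prime, p > 2N} p^{α_p(N)}. -/
/-- `Q_f(N) = |f(1) ⋯ f(N)|`. -/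
noncomputable def Qf (f : Polynomial ℤ) (N : ℕ) : ℕ :=
  (∏ n ∈ Finset.Icc 1 N, f.eval (n : ℤ)).natAbs

/-- `α_p(N) = ν_p(Q_f(N))`. -/
noncomputable def alphaP (f : Polynomial ℤ) (p N : ℕ) : ℕ := (Qf f N).factorization p

/-- `L_f(N) = lcm{f(1), …, f(N)}` (as a natural number). -/
noncomputable def Lf (f : Polynomial ℤ) (N : ℕ) : ℕ :=
  (Finset.Icc 1 N).lcm fun n => (f.eval (n : ℤ)).natAbs

private lemma evalNeZero (f : Polynomial ℤ) (hmonic : f.Monic) (hirr : Irreducible f)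
    (hd : 2 ≤ f.natDegree) (n : ℤ) : f.eval n ≠ 0 := by
  intro h
  obtain ⟨g, hg⟩ := Polynomial.dvd_iff_isRoot.2 h
  have hgne : g ≠ 0 := by
    rintro rfl
    rw [mul_zero] at hg
    exact hmonic.ne_zero hg
  rcases hirr.isUnit_or_isUnit hg with hu | hu
  · exact Polynomial.not_isUnit_X_sub_C n hu
  · have h1 : g.natDegree = 0 := Polynomial.natDegree_eq_zero_of_isUnit hu
    have : f.natDegree = 1 := by
      rw [hg, Polynomial.natDegree_mul (Polynomial.X_sub_C_ne_zero n) hgne,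
        Polynomial.natDegree_X_sub_C, h1]
    omega

private lemma card_bound (f : Polynomial ℤ) (d : ℕ) (hmonic : f.Monic)
    (hdeg : f.natDegree = d) (heven : f.comp (-Polynomial.X) = f)
    (N p : ℕ) (hp : p.Prime) (hpN : 2 * N < p) :
    2 * ((Finset.Icc 1 N).filter (fun n : ℕ => (p:ℤ) ∣ f.eval (n:ℤ))).card ≤ d := by
  haveI : Fact p.Prime := ⟨hp⟩
  set φ := Int.castRingHom (ZMod p) with hφ
  set g := f.map φ with hgdef
  have hg0 : g ≠ 0 := (hmonic.map φ).ne_zero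
  set S := (Finset.Icc 1 N).filter (fun n : ℕ => (p:ℤ) ∣ f.eval (n:ℤ)) with hSdef
  set R := g.roots.toFinset with hR
  have hSmem : ∀ n ∈ S, 1 ≤ n ∧ n ≤ N ∧ (p:ℤ) ∣ f.eval (n:ℤ) := by
    intro n hn
    rw [hSdef, Finset.mem_filter, Finset.mem_Icc] at hn
    exact ⟨hn.1.1, hn.1.2, hn.2⟩
  have hroot : ∀ n ∈ S, ((n : ZMod p) ∈ R ∧ (-(n : ZMod p)) ∈ R) := by
    intro n hn
    obtain ⟨-, -, hn2⟩ := hSmem n hn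
    have h1 : g.eval ((n:ℤ) : ZMod p) = 0 := by
      rw [hgdef, Polynomial.eval_intCast_map]
      exact (ZMod.intCast_zmod_eq_zero_iff_dvd _ p).2 hn2
    have h2 : g.eval ((-(n:ℕ) : ℤ) : ZMod p) = 0 := by
      rw [hgdef, Polynomial.eval_intCast_map]
      have heq : f.eval (-(n:ℕ) : ℤ) = f.eval ((n:ℕ) : ℤ) := by
        conv_lhs => rw [← heven]
        simp [Polynomial.eval_comp]
      simp only [Int.cast_id]
      rw [heq]
      exact (ZMod.intCast_zmod_eq_zero_iff_dvd _ p).2 hn2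
    constructor
    · rw [hR, Multiset.mem_toFinset, Polynomial.mem_roots']
      refine ⟨hg0, ?_⟩
      have : ((n:ℤ) : ZMod p) = (n : ZMod p) := by push_cast; ring
      rwa [Polynomial.IsRoot, ← this]
    · rw [hR, Multiset.mem_toFinset, Polynomial.mem_roots']
      refine ⟨hg0, ?_⟩
      have : ((-(n:ℕ) : ℤ) : ZMod p) = -(n : ZMod p) := by push_cast; ring
      rwa [Polynomial.IsRoot, ← this]
  have hcast_inj : ∀ n ∈ S, ∀ m ∈ S, (n : ZMod p) = (m : ZMod p) → n = m := by
    intro n hn m hm h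
    obtain ⟨hn1, hn2, -⟩ := hSmem n hn
    obtain ⟨hm1, hm2, -⟩ := hSmem m hm
    rw [ZMod.natCast_eq_natCast_iff] at h
    have h2 : n % p = m % p := h
    rw [Nat.mod_eq_of_lt (by omega), Nat.mod_eq_of_lt (by omega)] at h2
    exact h2
  set A := S.image (fun n : ℕ => (n : ZMod p)) with hA
  set B := S.image (fun n : ℕ => -(n : ZMod p)) with hB
  have hAcard : A.card = S.card := Finset.card_image_of_injOn hcast_inj
  have hBcard : B.card = S.card := Finset.card_image_of_injOn (by
    intro n hn m hm h
    exact hcast_inj n hn m hm (neg_inj.mp h))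
  have hdisj : Disjoint A B := by
    rw [Finset.disjoint_left]
    intro x hx hx'
    rw [hA, Finset.mem_image] at hx
    rw [hB, Finset.mem_image] at hx'
    obtain ⟨n, hn, rfl⟩ := hx
    obtain ⟨m, hm, hme⟩ := hx'
    obtain ⟨hn1, hn2, -⟩ := hSmem n hn
    obtain ⟨hm1, hm2, -⟩ := hSmem m hm
    have : ((m + n : ℕ) : ZMod p) = 0 := by push_cast; rw [← hme]; ring
    rw [ZMod.natCast_eq_zero_iff] at this
    have := Nat.le_of_dvd (by omega) this
    omega
  have hsub : A ∪ B ⊆ R := by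
    intro x hx
    rcases Finset.mem_union.mp hx with hx | hx
    · obtain ⟨n, hn, rfl⟩ := Finset.mem_image.mp hx
      exact (hroot n hn).1
    · obtain ⟨n, hn, rfl⟩ := Finset.mem_image.mp hx
      exact (hroot n hn).2
  have hRcard : R.card ≤ d := by
    calc R.card ≤ Multiset.card g.roots := Multiset.toFinset_card_le _
      _ ≤ g.natDegree := Polynomial.card_roots' g
      _ = d := by rw [hgdef, hmonic.natDegree_map, hdeg]
  have := Finset.card_le_card hsub
  rw [Finset.card_union_of_disjoint hdisj, hAcard, hBcard] at this
  omega

theorem Lf_pow_ge_large_prime_part (f : Polynomial ℤ) (d : ℕ) (hmonic : f.Monic)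
    (hirr : Irreducible f) (hdeg : f.natDegree = d) (hd : 2 ≤ d) (hdeven : Even d)
    (heven : f.comp (-Polynomial.X) = f) :
    ∃ N₀ : ℕ, ∀ N : ℕ, N₀ ≤ N →
      (∏ p ∈ (Qf f N).primeFactors.filter (fun p => 2 * N < p), p ^ alphaP f p N) ≤
        Lf f N ^ (d / 2) := by
  refine ⟨0, fun N _ => ?_⟩
  have hne : ∀ n : ℤ, f.eval n ≠ 0 := evalNeZero f hmonic hirr (hdeg ▸ hd)
  have hQ : Qf f N = ∏ n ∈ Finset.Icc 1 N, (f.eval (n:ℤ)).natAbs :=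
    map_prod Int.natAbsHom _ _
  have hQ0 : Qf f N ≠ 0 := by
    rw [hQ]
    exact Finset.prod_ne_zero_iff.2 fun n _ => Int.natAbs_ne_zero.2 (hne _)
  have hdvdL : ∀ n ∈ Finset.Icc 1 N, (f.eval (n:ℤ)).natAbs ∣ Lf f N :=
    fun n hn => Finset.dvd_lcm hn
  have hL0 : Lf f N ≠ 0 := by
    rw [Lf]
    intro h
    rw [Finset.lcm_eq_zero_iff] at h
    obtain ⟨n, -, hn⟩ := h
    rw [Int.natAbs_eq_zero] at hn
    exact hne _ hn
  set T := (Qf f N).primeFactors.filter (fun p => 2 * N < p) with hT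
  have key : ∀ p ∈ T, p ∈ (Lf f N).primeFactors ∧
      alphaP f p N ≤ (Lf f N).factorization p * (d / 2) := by
    intro p hpT
    rw [hT, Finset.mem_filter] at hpT
    obtain ⟨hpQ, hpN⟩ := hpT
    have hp : p.Prime := Nat.prime_of_mem_primeFactors hpQ
    have hpdvdQ : p ∣ Qf f N := Nat.dvd_of_mem_primeFactors hpQ
    have hpdvd : ∃ n ∈ Finset.Icc 1 N, p ∣ (f.eval (n:ℤ)).natAbs := by
      rw [hQ] at hpdvdQ
      exact (hp.prime.dvd_finset_prod_iff _).1 hpdvdQ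
    obtain ⟨n₀, hn₀, hpn₀⟩ := hpdvd
    have hpL : p ∣ Lf f N := hpn₀.trans (hdvdL n₀ hn₀)
    refine ⟨Nat.mem_primeFactors.2 ⟨hp, hpL, hL0⟩, ?_⟩
    -- α_p = Σ ν_p(|f(n)|)
    have hα : alphaP f p N = ∑ n ∈ Finset.Icc 1 N, ((f.eval (n:ℤ)).natAbs).factorization p := by
      rw [alphaP, hQ, Nat.factorization_prod (fun n _ => Int.natAbs_ne_zero.2 (hne _))]
      simp [Finset.sum_apply']
    set S := (Finset.Icc 1 N).filter (fun n : ℕ => (p:ℤ) ∣ f.eval (n:ℤ)) with hSdef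
    have hαS : alphaP f p N = ∑ n ∈ S, ((f.eval (n:ℤ)).natAbs).factorization p := by
      rw [hα, hSdef]
      refine (Finset.sum_filter_of_ne ?_).symm
      intro n _ hne0
      by_contra hnd
      exact hne0 (Nat.factorization_eq_zero_of_not_dvd (by rwa [← Int.natCast_dvd] ) )
    have hterm : ∀ n ∈ S, ((f.eval (n:ℤ)).natAbs).factorization p ≤ (Lf f N).factorization p := by
      intro n hn
      rw [hSdef, Finset.mem_filter] at hn
      have := (Nat.factorization_le_iff_dvd (Int.natAbs_ne_zero.2 (hne _)) hL0).2
        (hdvdL n hn.1)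
      exact this p
    have hcard : S.card ≤ d / 2 := by
      have h2 := card_bound f d hmonic hdeg heven N p hp hpN
      rw [← hSdef] at h2
      omega
    calc alphaP f p N = ∑ n ∈ S, ((f.eval (n:ℤ)).natAbs).factorization p := hαS
      _ ≤ S.card * (Lf f N).factorization p := by
          exact Finset.sum_le_card_nsmul S _ _ hterm
      _ ≤ (d / 2) * (Lf f N).factorization p := Nat.mul_le_mul_right _ hcard
      _ = (Lf f N).factorization p * (d / 2) := Nat.mul_comm _ _
  calc (∏ p ∈ T, p ^ alphaP f p N)
      ≤ ∏ p ∈ T, p ^ ((Lf f N).factorization p * (d / 2)) := by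
        refine Finset.prod_le_prod' ?_
        intro p hp
        exact Nat.pow_le_pow_right (Nat.prime_of_mem_primeFactors
          (Finset.mem_filter.mp hp).1).pos (key p hp).2
    _ ≤ ∏ p ∈ (Lf f N).primeFactors, p ^ ((Lf f N).factorization p * (d / 2)) := by
        refine Finset.prod_le_prod_of_subset_of_one_le' (fun p hp => (key p hp).1) ?_
        intro p hp _
        exact Nat.one_le_iff_ne_zero.2 (pow_ne_zero _ (Nat.prime_of_mem_primeFactors hp).pos.ne')
    _ = (∏ p ∈ (Lf f N).primeFactors, p ^ (Lf f N).factorization p) ^ (d / 2) := by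
        rw [← Finset.prod_pow]
        exact Finset.prod_congr rfl fun p _ => by rw [pow_mul]
    _ = Lf f N ^ (d / 2) := by
        conv_rhs => rw [← Nat.factorization_prod_pow_eq_self hL0]
        rw [Finsupp.prod, Nat.support_factorization]
end

section
/- Let α₁, α₂, α₃ be three pairwise distinct complex roots of the polynomial X⁶ − 2. Then there exist integers b₁, b₂, b₃ ∈ {−1, 0, 1}, not all zero, such that b₁·α₁ + b₂·α₂ + b₃·α₃ = 0. -/
/-!
If `y³ = x³` and `z³ = x³`, then
`(y - x) (z - x) (y - z) (x + y + z) = (z - x) (y³ - x³) - (y - x) (z³ - x³) = 0`,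
so two of `x, y, z` coincide or `x + y + z = 0`. A sixth power equality `y⁶ = x⁶` says
`y³ = ±x³`, i.e. `y` or `-y` has the same cube as `x`, and a sign change on a summand
is absorbed by its coefficient.
-/

section Ring

variable {R : Type*} [Ring R]

def HasSignedZeroSum (x y z : R) : Prop :=
  ∃ b₁ b₂ b₃ : ℤ, b₁ ∈ ({-1, 0, 1} : Set ℤ) ∧ b₂ ∈ ({-1, 0, 1} : Set ℤ) ∧
    b₃ ∈ ({-1, 0, 1} : Set ℤ) ∧ ¬ (b₁ = 0 ∧ b₂ = 0 ∧ b₃ = 0) ∧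
    (b₁ : R) * x + (b₂ : R) * y + (b₃ : R) * z = 0

lemma neg_mem_signs {b : ℤ} (hb : b ∈ ({-1, 0, 1} : Set ℤ)) : -b ∈ ({-1, 0, 1} : Set ℤ) := by
  rcases hb with rfl | rfl | rfl <;> simp

namespace HasSignedZeroSum

variable {x y z : R}

lemma of_neg_second (h : HasSignedZeroSum x (-y) z) : HasSignedZeroSum x y z := by
  obtain ⟨b₁, b₂, b₃, h₁, h₂, h₃, hne, hsum⟩ := h
  refine ⟨b₁, -b₂, b₃, h₁, neg_mem_signs h₂, h₃, by rwa [neg_eq_zero], ?_⟩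
  simpa only [Int.cast_neg, neg_mul, mul_neg] using hsum

lemma of_neg_third (h : HasSignedZeroSum x y (-z)) : HasSignedZeroSum x y z := by
  obtain ⟨b₁, b₂, b₃, h₁, h₂, h₃, hne, hsum⟩ := h
  refine ⟨b₁, b₂, -b₃, h₁, h₂, neg_mem_signs h₃, by rwa [neg_eq_zero], ?_⟩
  simpa only [Int.cast_neg, neg_mul, mul_neg] using hsum

end HasSignedZeroSum

end Ring

section CommRing

variable {R : Type*} [CommRing R] [NoZeroDivisors R] {x y z : R}

lemma eq_or_eq_or_eq_or_add_add_eq_zero_of_pow_three_eq (hy : y ^ 3 = x ^ 3) (hz : z ^ 3 = x ^ 3) :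
    y = x ∨ z = x ∨ y = z ∨ x + y + z = 0 := by
  have key : (y - x) * (z - x) * (y - z) * (x + y + z) = 0 := by
    linear_combination (z - x) * hy - (y - x) * hz
  simpa only [mul_eq_zero, sub_eq_zero, or_assoc] using key

lemma hasSignedZeroSum_of_pow_three_eq (hy : y ^ 3 = x ^ 3) (hz : z ^ 3 = x ^ 3) :
    HasSignedZeroSum x y z := by
  rcases eq_or_eq_or_eq_or_add_add_eq_zero_of_pow_three_eq hy hz with h | h | h | h
  · exact ⟨1, -1, 0, by simp, by simp, by simp, by simp, by push_cast; linear_combination -h⟩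
  · exact ⟨1, 0, -1, by simp, by simp, by simp, by simp, by push_cast; linear_combination -h⟩
  · exact ⟨0, 1, -1, by simp, by simp, by simp, by simp, by push_cast; linear_combination h⟩
  · exact ⟨1, 1, 1, by simp, by simp, by simp, by simp, by push_cast; linear_combination h⟩

lemma pow_three_eq_or_neg_pow_three_eq_of_pow_six_eq (h : y ^ 6 = x ^ 6) :
    y ^ 3 = x ^ 3 ∨ (-y) ^ 3 = x ^ 3 := by
  have key : (y ^ 3 - x ^ 3) * ((-y) ^ 3 - x ^ 3) = 0 := by linear_combination -h
  simpa only [mul_eq_zero, sub_eq_zero] using key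

lemma hasSignedZeroSum_of_pow_six_eq (hy : y ^ 6 = x ^ 6) (hz : z ^ 6 = x ^ 6) :
    HasSignedZeroSum x y z := by
  rcases pow_three_eq_or_neg_pow_three_eq_of_pow_six_eq hy with hy | hy <;>
    rcases pow_three_eq_or_neg_pow_three_eq_of_pow_six_eq hz with hz | hz
  · exact hasSignedZeroSum_of_pow_three_eq hy hz
  · exact (hasSignedZeroSum_of_pow_three_eq hy hz).of_neg_third
  · exact (hasSignedZeroSum_of_pow_three_eq hy hz).of_neg_second
  · exact (hasSignedZeroSum_of_pow_three_eq hy hz).of_neg_third.of_neg_second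

end CommRing

theorem zero_sum_roots_X_pow_six_sub_two_general (α₁ α₂ α₃ : ℂ)
    (h₁ : Polynomial.aeval α₁ ((Polynomial.X : Polynomial ℤ) ^ 6 - 2) = 0)
    (h₂ : Polynomial.aeval α₂ ((Polynomial.X : Polynomial ℤ) ^ 6 - 2) = 0)
    (h₃ : Polynomial.aeval α₃ ((Polynomial.X : Polynomial ℤ) ^ 6 - 2) = 0) :
    ∃ b₁ b₂ b₃ : ℤ, b₁ ∈ ({-1, 0, 1} : Set ℤ) ∧ b₂ ∈ ({-1, 0, 1} : Set ℤ) ∧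
      b₃ ∈ ({-1, 0, 1} : Set ℤ) ∧ ¬ (b₁ = 0 ∧ b₂ = 0 ∧ b₃ = 0) ∧
      (b₁ : ℂ) * α₁ + (b₂ : ℂ) * α₂ + (b₃ : ℂ) * α₃ = 0 := by
  simp only [map_sub, map_pow, Polynomial.aeval_X, map_ofNat, sub_eq_zero] at h₁ h₂ h₃
  exact hasSignedZeroSum_of_pow_six_eq (h₂.trans h₁.symm) (h₃.trans h₁.symm)

theorem zero_sum_roots_X_pow_six_sub_two (α₁ α₂ α₃ : ℂ)
    (h₁ : Polynomial.aeval α₁ ((Polynomial.X : Polynomial ℤ) ^ 6 - 2) = 0)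
    (h₂ : Polynomial.aeval α₂ ((Polynomial.X : Polynomial ℤ) ^ 6 - 2) = 0)
    (h₃ : Polynomial.aeval α₃ ((Polynomial.X : Polynomial ℤ) ^ 6 - 2) = 0)
    (h₁₂ : α₁ ≠ α₂) (h₁₃ : α₁ ≠ α₃) (h₂₃ : α₂ ≠ α₃) :
    ∃ b₁ b₂ b₃ : ℤ, b₁ ∈ ({-1, 0, 1} : Set ℤ) ∧ b₂ ∈ ({-1, 0, 1} : Set ℤ) ∧
      b₃ ∈ ({-1, 0, 1} : Set ℤ) ∧ ¬ (b₁ = 0 ∧ b₂ = 0 ∧ b₃ = 0) ∧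
      (b₁ : ℂ) * α₁ + (b₂ : ℂ) * α₂ + (b₃ : ℂ) * α₃ = 0 :=
  zero_sum_roots_X_pow_six_sub_two_general α₁ α₂ α₃ h₁ h₂ h₃
end

section
/- Let η ≥ 1 be a fixed integer and let f = X^(2^η) + 1 ∈ ℤ[X]. Then there exist a constant c > 0 (depending on η) and a threshold N₀ such that for every integer N ≥ N₀ one has ℓ_f(N)^(η·2^(η−1)) ≥ Π_{p prime, p > cN} p^{α_p(N)}. -/
/-- The radical of a natural number: the product of its distinct prime divisors. -/
def radN (n : ℕ) : ℕ := ∏ p ∈ n.primeFactors, p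

/-- `ℓ_f(N) = rad Q_f(N)`. -/
noncomputable def ellf (f : Polynomial ℤ) (N : ℕ) : ℕ := radN (Qf f N)


section Aux
open Finset

lemma tele {R : Type*} [CommRing R] (x y : R) (t : ℕ) :
    x ^ 2 ^ t - y ^ 2 ^ t = (x - y) * ∏ i ∈ Finset.range t, (x ^ 2 ^ i + y ^ 2 ^ i) := by
  induction t with
  | zero => simp
  | succ t ih =>
    have h2 : (2:ℕ) ^ (t+1) = 2 ^ t * 2 := by ring
    rw [h2, pow_mul, pow_mul, Finset.prod_range_succ, ← mul_assoc, ← ih]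
    ring

lemma count_bound (η N p j : ℕ) (hη : 1 ≤ η) (hN : 1 ≤ N) (hp : p.Prime) (hpN : 2 * N < p)
    (hj : 1 ≤ j) (hjη : Nat.log 2 j ≤ η - 1) :
    ((Finset.Icc 1 N).filter (fun n => p ^ j ∣ n ^ 2 ^ η + 1)).card
      ≤ 2 ^ (η - 1 - Nat.log 2 j) := by
  haveI : Fact p.Prime := ⟨hp⟩
  by_contra hcard
  push_neg at hcard
  set u := Nat.log 2 j with hu
  set t := u + 1 with ht
  have htη : t ≤ η := by omega
  -- the roots finset
  set d := 2 ^ (η - 1 - u) with hd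
  have hdpos : 0 < d := Nat.pow_pos (by norm_num)
  set Rts := (Polynomial.nthRoots d (-1 : ZMod p)).toFinset with hR
  have hRcard : Rts.card ≤ d := le_trans (Multiset.toFinset_card_le _) (Polynomial.card_nthRoots d _)
  -- facts about members of T
  set T := (Finset.Icc 1 N).filter (fun n => p ^ j ∣ n ^ 2 ^ η + 1) with hT
  have hmem : ∀ n ∈ T, 1 ≤ n ∧ n ≤ N ∧ p ^ j ∣ n ^ 2 ^ η + 1 := by
    intro n hn
    simp only [hT, Finset.mem_filter, Finset.mem_Icc] at hn
    exact ⟨hn.1.1, hn.1.2, hn.2⟩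
  have hpdvd : ∀ n ∈ T, ((n : ZMod p)) ^ 2 ^ η = -1 := by
    intro n hn
    have h1 : p ∣ n ^ 2 ^ η + 1 := dvd_trans (dvd_pow_self p (by omega : j ≠ 0)) (hmem n hn).2.2
    have h2 : ((n ^ 2 ^ η + 1 : ℕ) : ZMod p) = 0 := (ZMod.natCast_eq_zero_iff _ _).mpr h1
    push_cast at h2
    linear_combination h2
  have hmaps : ∀ n ∈ T, ((n : ZMod p)) ^ 2 ^ t ∈ Rts := by
    intro n hn
    rw [hR, Multiset.mem_toFinset, Polynomial.mem_nthRoots hdpos, ← pow_mul, ← pow_add]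
    have : t + (η - 1 - u) = η := by omega
    rw [this]
    exact hpdvd n hn
  obtain ⟨n₁, hn₁, n₂, hn₂, hne, heq⟩ :=
    Finset.exists_ne_map_eq_of_card_lt_of_maps_to (lt_of_le_of_lt hRcard hcard) hmaps
  obtain ⟨hn₁1, hn₁N, hn₁d⟩ := hmem n₁ hn₁
  obtain ⟨hn₂1, hn₂N, hn₂d⟩ := hmem n₂ hn₂
  set a : ZMod p := (n₁ : ZMod p) with ha
  set b : ZMod p := (n₂ : ZMod p) with hb
  have hppos : 0 < p := hp.pos
  -- a ≠ b
  have hab : a ≠ b := by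
    intro h
    apply hne
    have := (ZMod.natCast_eq_natCast_iff n₁ n₂ p).mp h
    have h1 : n₁ % p = n₂ % p := this
    rwa [Nat.mod_eq_of_lt (by omega), Nat.mod_eq_of_lt (by omega)] at h1
  -- b ≠ 0 and a ≠ 0
  have hbne : b ≠ 0 := by
    intro h
    have hdvd : p ∣ n₂ := (ZMod.natCast_eq_zero_iff _ _).mp h
    have h1 : p ∣ n₂ ^ 2 ^ η := dvd_pow hdvd (Nat.pow_pos (by norm_num)).ne'
    have h2 : p ∣ n₂ ^ 2 ^ η + 1 := dvd_trans (dvd_pow_self p (by omega : j ≠ 0)) hn₂d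
    have : p ∣ 1 := (Nat.dvd_add_right h1).mp h2
    exact Nat.Prime.one_lt hp |>.ne' (Nat.le_antisymm (Nat.le_of_dvd one_pos this) (by omega))
  -- a + b ≠ 0
  have habne : a + b ≠ 0 := by
    intro h
    have : ((n₁ + n₂ : ℕ) : ZMod p) = 0 := by push_cast; exact h
    have hdvd : p ∣ n₁ + n₂ := (ZMod.natCast_eq_zero_iff _ _).mp this
    have : p ≤ n₁ + n₂ := Nat.le_of_dvd (by omega) hdvd
    omega
  have htwo : (2 : ZMod p) ≠ 0 := by
    intro h
    have : ((2 : ℕ) : ZMod p) = 0 := by push_cast; exact h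
    have := (ZMod.natCast_eq_zero_iff _ _).mp this
    have := Nat.le_of_dvd (by norm_num) this
    omega
  -- from heq : a ^ 2^t = b ^ 2^t, find i₀
  have h0 : (a - b) * ∏ i ∈ Finset.range t, (a ^ 2 ^ i + b ^ 2 ^ i) = 0 := by
    rw [← tele]
    rw [ha, hb, heq]
    ring
  have hprod0 : ∏ i ∈ Finset.range t, (a ^ 2 ^ i + b ^ 2 ^ i) = 0 := by
    rcases mul_eq_zero.mp h0 with h | h
    · exact absurd (sub_eq_zero.mp h) hab
    · exact h
  obtain ⟨i₀, hi₀t, hi₀0⟩ := Finset.prod_eq_zero_iff.mp hprod0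
  rw [Finset.mem_range] at hi₀t
  have hi₀ne : i₀ ≠ 0 := by
    intro h
    rw [h] at hi₀0
    simp only [pow_zero, pow_one] at hi₀0
    exact habne hi₀0
  -- uniqueness
  have huniq : ∀ i i' : ℕ, i < i' → a ^ 2 ^ i + b ^ 2 ^ i = 0 → a ^ 2 ^ i' + b ^ 2 ^ i' = 0 → False := by
    intro i i' hii h1 h2
    have he : a ^ 2 ^ i = -(b ^ 2 ^ i) := by linear_combination h1
    have hev : Even (2 ^ (i' - i)) := by
      refine (Nat.even_pow).mpr ⟨even_iff_two_dvd.mpr dvd_rfl, by omega⟩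
    have h3 : a ^ 2 ^ i' = b ^ 2 ^ i' := by
      have : (2:ℕ) ^ i' = 2 ^ i * 2 ^ (i' - i) := by
        rw [← pow_add]; congr 1; omega
      rw [this, pow_mul, pow_mul, he, hev.neg_pow]
    rw [h3] at h2
    have : (2 : ZMod p) * b ^ 2 ^ i' = 0 := by ring_nf; linear_combination h2
    rcases mul_eq_zero.mp this with h | h
    · exact htwo h
    · exact hbne (pow_eq_zero_iff (Nat.pow_pos (by norm_num)).ne' |>.mp h)
  -- Int-level divisibility
  have hD : (p : ℤ) ^ j ∣ ((n₁ : ℤ) ^ 2 ^ η - (n₂ : ℤ) ^ 2 ^ η) := by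
    have d1 : (p : ℤ) ^ j ∣ ((n₁ ^ 2 ^ η + 1 : ℕ) : ℤ) := by exact_mod_cast Int.natCast_dvd_natCast.mpr hn₁d
    have d2 : (p : ℤ) ^ j ∣ ((n₂ ^ 2 ^ η + 1 : ℕ) : ℤ) := by exact_mod_cast Int.natCast_dvd_natCast.mpr hn₂d
    have := dvd_sub d1 d2
    push_cast at this
    convert this using 1
    · rfl
    ring
  rw [tele] at hD
  have hi₀η : i₀ ∈ Finset.range η := Finset.mem_range.mpr (by omega)
  rw [← Finset.mul_prod_erase _ _ hi₀η] at hD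
  -- coprimality: p^j coprime to (n₁ - n₂) * ∏_{erase}
  have hpInt : Prime (p : ℤ) := Nat.prime_iff_prime_int.mp hp
  have hnd1 : ¬ (p : ℤ) ∣ ((n₁ : ℤ) - n₂) := by
    intro h
    have : (((n₁ : ℤ) - n₂ : ℤ) : ZMod p) = 0 := (ZMod.intCast_zmod_eq_zero_iff_dvd _ _).mpr h
    push_cast at this
    exact hab (by linear_combination this)
  have hnd2 : ∀ i ∈ (Finset.range η).erase i₀, ¬ (p:ℤ) ∣ ((n₁:ℤ) ^ 2 ^ i + (n₂:ℤ) ^ 2 ^ i) := by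
    intro i hi hdv
    have hii₀ : i ≠ i₀ := (Finset.mem_erase.mp hi).1
    have : (((n₁:ℤ) ^ 2 ^ i + (n₂:ℤ) ^ 2 ^ i : ℤ) : ZMod p) = 0 :=
      (ZMod.intCast_zmod_eq_zero_iff_dvd _ _).mpr hdv
    push_cast at this
    rcases lt_or_gt_of_ne hii₀ with h | h
    · exact huniq i i₀ h this hi₀0
    · exact huniq i₀ i h hi₀0 this
  have hcop : IsCoprime ((p:ℤ) ^ j)
      (((n₁:ℤ) - n₂) * ∏ i ∈ (Finset.range η).erase i₀, ((n₁:ℤ) ^ 2 ^ i + (n₂:ℤ) ^ 2 ^ i)) := by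
    apply IsCoprime.pow_left
    apply IsCoprime.mul_right
    · exact (Prime.coprime_iff_not_dvd hpInt).mpr hnd1
    · exact IsCoprime.prod_right (fun i hi => (Prime.coprime_iff_not_dvd hpInt).mpr (hnd2 i hi))
  have hdvd : (p:ℤ) ^ j ∣ ((n₁:ℤ) ^ 2 ^ i₀ + (n₂:ℤ) ^ 2 ^ i₀) := by
    apply hcop.dvd_of_dvd_mul_left
    convert hD using 1
    · rfl
    ring
  -- back to ℕ and size contradiction
  have hdvdN : p ^ j ∣ (n₁ ^ 2 ^ i₀ + n₂ ^ 2 ^ i₀) := by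
    have : ((p ^ j : ℕ) : ℤ) ∣ ((n₁ ^ 2 ^ i₀ + n₂ ^ 2 ^ i₀ : ℕ) : ℤ) := by push_cast; exact hdvd
    exact_mod_cast this
  have hle : p ^ j ≤ n₁ ^ 2 ^ i₀ + n₂ ^ 2 ^ i₀ :=
    Nat.le_of_dvd (by positivity) hdvdN
  -- but p^j > 2 N^{2^i₀}
  have h2i₀ : 2 ^ i₀ ≤ j := le_trans (Nat.pow_le_pow_right (by norm_num) (by omega)) (Nat.pow_log_le_self 2 (by omega))
  have hlt1 : n₁ ^ 2 ^ i₀ + n₂ ^ 2 ^ i₀ ≤ 2 * N ^ 2 ^ i₀ := by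
    have h1 : n₁ ^ 2 ^ i₀ ≤ N ^ 2 ^ i₀ := Nat.pow_le_pow_left hn₁N _
    have h2 : n₂ ^ 2 ^ i₀ ≤ N ^ 2 ^ i₀ := Nat.pow_le_pow_left hn₂N _
    omega
  have hlt2 : 2 * N ^ 2 ^ i₀ < (2 * N) ^ 2 ^ i₀ := by
    rw [mul_pow]
    have hNpos : 0 < N ^ 2 ^ i₀ := Nat.pow_pos (by omega)
    have : (4:ℕ) ≤ 2 ^ 2 ^ i₀ := by
      calc (4:ℕ) = 2 ^ 2 := by norm_num
      _ ≤ 2 ^ 2 ^ i₀ := Nat.pow_le_pow_right (by norm_num) (by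
            calc (2:ℕ) = 2 ^ 1 := (pow_one 2).symm
            _ ≤ 2 ^ i₀ := Nat.pow_le_pow_right (by norm_num) (by omega))
    calc 2 * N ^ 2 ^ i₀ < 4 * N ^ 2 ^ i₀ := by omega
    _ ≤ 2 ^ 2 ^ i₀ * N ^ 2 ^ i₀ := Nat.mul_le_mul_right _ this
  have hlt3 : (2 * N) ^ 2 ^ i₀ < p ^ 2 ^ i₀ :=
    Nat.pow_lt_pow_left hpN (Nat.pow_pos (by norm_num)).ne'
  have hlt4 : p ^ 2 ^ i₀ ≤ p ^ j := Nat.pow_le_pow_right hppos h2i₀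
  omega


lemma sum_bound : ∀ η : ℕ,
    ∑ j ∈ Finset.Ico 1 (2 ^ η), 2 ^ (η - 1 - Nat.log 2 j) ≤ η * 2 ^ (η - 1) := by
  intro η
  induction η with
  | zero => simp
  | succ η ih =>
    have h1 : (1:ℕ) ≤ 2 ^ η := Nat.one_le_two_pow
    have h2 : (2:ℕ) ^ η ≤ 2 ^ (η + 1) := Nat.pow_le_pow_right (by norm_num) (by omega)
    rw [← Finset.sum_Ico_consecutive _ h1 h2]
    have e1 : ∑ j ∈ Finset.Ico 1 (2 ^ η), 2 ^ (η + 1 - 1 - Nat.log 2 j)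
        = ∑ j ∈ Finset.Ico 1 (2 ^ η), 2 * 2 ^ (η - 1 - Nat.log 2 j) := by
      apply Finset.sum_congr rfl
      intro j hj
      rw [Finset.mem_Ico] at hj
      have hlog : Nat.log 2 j < η := Nat.log_lt_of_lt_pow (by omega) hj.2
      rw [show η + 1 - 1 - Nat.log 2 j = (η - 1 - Nat.log 2 j) + 1 by omega, pow_succ]
      ring
    have e2 : ∑ j ∈ Finset.Ico (2 ^ η) (2 ^ (η + 1)), 2 ^ (η + 1 - 1 - Nat.log 2 j)
        = ∑ j ∈ Finset.Ico (2 ^ η) (2 ^ (η + 1)), 1 := by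
      apply Finset.sum_congr rfl
      intro j hj
      rw [Finset.mem_Ico] at hj
      have hlog : Nat.log 2 j = η := Nat.log_eq_of_pow_le_of_lt_pow hj.1 hj.2
      rw [hlog]
      simp
    rw [e1, e2, ← Finset.mul_sum, Finset.sum_const, Nat.card_Ico, smul_eq_mul, mul_one]
    have : 2 * ∑ j ∈ Finset.Ico 1 (2 ^ η), 2 ^ (η - 1 - Nat.log 2 j) ≤ 2 * (η * 2 ^ (η - 1)) :=
      Nat.mul_le_mul_left 2 ih
    have hpow : 2 * (η * 2 ^ (η - 1)) + (2 ^ (η+1) - 2 ^ η) ≤ (η + 1) * 2 ^ (η + 1 - 1) := by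
      rcases Nat.eq_zero_or_pos η with h | h
      · subst h; simp
      · have e0 : 2 * 2 ^ (η - 1) = 2 ^ η := by
          rw [← pow_succ']
          congr 1
          omega
        have e3 : 2 * (η * 2 ^ (η - 1)) = η * 2 ^ η := by rw [← e0]; ring
        have h2' : 2 ^ (η+1) = 2 ^ η + 2 ^ η := by rw [pow_succ]; ring
        have e5 : (η + 1) * 2 ^ (η + 1 - 1) = η * 2 ^ η + 2 ^ η := by
          simp only [Nat.add_sub_cancel]; ring
        rw [e3, h2', Nat.add_sub_cancel, e5]
    omega

lemma alpha_le (η N p : ℕ) (hη : 1 ≤ η) (hN : 1 ≤ N) (hp : p.Prime) (hpN : 2 * N < p) :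
    (∏ n ∈ Finset.Icc 1 N, (n ^ 2 ^ η + 1)).factorization p ≤ η * 2 ^ (η - 1) := by
  have hne : ∀ n ∈ Finset.Icc 1 N, n ^ 2 ^ η + 1 ≠ 0 := fun n _ => by positivity
  rw [Nat.factorization_prod hne]
  rw [Finset.sum_apply']
  -- each term: ν n ≤ 2^η - 1 and ν n = card of filter
  have hν : ∀ n ∈ Finset.Icc 1 N, (n ^ 2 ^ η + 1).factorization p
      = ((Finset.Ico 1 (2 ^ η)).filter (fun j => p ^ j ∣ n ^ 2 ^ η + 1)).card := by
    intro n hn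
    rw [Finset.mem_Icc] at hn
    have hnz : n ^ 2 ^ η + 1 ≠ 0 := by positivity
    have hνle : (n ^ 2 ^ η + 1).factorization p ≤ 2 ^ η - 1 := by
      by_contra hc
      push_neg at hc
      have h1 : p ^ 2 ^ η ∣ n ^ 2 ^ η + 1 :=
        (Nat.Prime.pow_dvd_iff_le_factorization hp hnz).mpr (by omega)
      have h2 : p ^ 2 ^ η ≤ n ^ 2 ^ η + 1 := Nat.le_of_dvd (by positivity) h1
      have h3 : n ^ 2 ^ η ≤ N ^ 2 ^ η := Nat.pow_le_pow_left hn.2 _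
      have h4 : (2 * N) ^ 2 ^ η < p ^ 2 ^ η :=
        Nat.pow_lt_pow_left hpN (Nat.pow_pos (by norm_num)).ne'
      have h5 : 2 * N ^ 2 ^ η ≤ (2 * N) ^ 2 ^ η := by
        rw [mul_pow]
        have : (2:ℕ) ≤ 2 ^ 2 ^ η := by
          calc (2:ℕ) = 2 ^ 1 := (pow_one 2).symm
          _ ≤ 2 ^ 2 ^ η := Nat.pow_le_pow_right (by norm_num) Nat.one_le_two_pow
        exact Nat.mul_le_mul_right _ this
      have h6 : 1 ≤ N ^ 2 ^ η := Nat.one_le_pow _ _ (by omega)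
      omega
    have hfilter : (Finset.Ico 1 (2 ^ η)).filter (fun j => p ^ j ∣ n ^ 2 ^ η + 1)
        = Finset.Icc 1 ((n ^ 2 ^ η + 1).factorization p) := by
      ext j
      simp only [Finset.mem_filter, Finset.mem_Ico, Finset.mem_Icc]
      constructor
      · rintro ⟨⟨h1, _⟩, hd⟩
        exact ⟨h1, (Nat.Prime.pow_dvd_iff_le_factorization hp hnz).mp hd⟩
      · rintro ⟨h1, h2⟩
        refine ⟨⟨h1, by omega⟩, (Nat.Prime.pow_dvd_iff_le_factorization hp hnz).mpr h2⟩
    rw [hfilter, Nat.card_Icc]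
    omega
  rw [Finset.sum_congr rfl hν]
  have hswap : ∑ n ∈ Finset.Icc 1 N,
      ((Finset.Ico 1 (2 ^ η)).filter (fun j => p ^ j ∣ n ^ 2 ^ η + 1)).card
      = ∑ j ∈ Finset.Ico 1 (2 ^ η),
        ((Finset.Icc 1 N).filter (fun n => p ^ j ∣ n ^ 2 ^ η + 1)).card := by
    simp only [Finset.card_filter]
    exact Finset.sum_comm
  rw [hswap]
  calc ∑ j ∈ Finset.Ico 1 (2 ^ η),
        ((Finset.Icc 1 N).filter (fun n => p ^ j ∣ n ^ 2 ^ η + 1)).card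
      ≤ ∑ j ∈ Finset.Ico 1 (2 ^ η), 2 ^ (η - 1 - Nat.log 2 j) := by
        apply Finset.sum_le_sum
        intro j hj
        rw [Finset.mem_Ico] at hj
        exact count_bound η N p j hη hN hp hpN hj.1
          (by have := Nat.log_lt_of_lt_pow (by omega : j ≠ 0) hj.2; omega)
    _ ≤ η * 2 ^ (η - 1) := sum_bound η

end Aux

theorem ellf_pow_ge_large_prime_part_cyclotomic (η : ℕ) (hη : 1 ≤ η) :
    ∃ c : ℝ, 0 < c ∧ ∃ N₀ : ℕ, ∀ N : ℕ, N₀ ≤ N →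
      (∏ p ∈ (Qf (Polynomial.X ^ 2 ^ η + 1) N).primeFactors.filter
          (fun p : ℕ => c * N < (p : ℝ)),
          p ^ alphaP (Polynomial.X ^ 2 ^ η + 1) p N) ≤
        ellf (Polynomial.X ^ 2 ^ η + 1) N ^ (η * 2 ^ (η - 1)) := by
  refine ⟨2, by norm_num, 1, fun N hN => ?_⟩
  set F : Polynomial ℤ := Polynomial.X ^ 2 ^ η + 1 with hF
  have hQ : Qf F N = ∏ n ∈ Finset.Icc 1 N, (n ^ 2 ^ η + 1) := by
    unfold Qf
    have : ∀ n ∈ Finset.Icc 1 N, F.eval (n : ℤ) = ((n ^ 2 ^ η + 1 : ℕ) : ℤ) := by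
      intro n _
      simp only [hF, Polynomial.eval_add, Polynomial.eval_pow, Polynomial.eval_X,
        Polynomial.eval_one]
      push_cast
      ring
    rw [Finset.prod_congr rfl this, ← Nat.cast_prod, Int.natAbs_natCast]
  set K := η * 2 ^ (η - 1) with hK
  set S := (Qf F N).primeFactors.filter (fun p : ℕ => (2:ℝ) * N < (p : ℝ)) with hS
  have hmem : ∀ p ∈ S, p.Prime ∧ 2 * N < p := by
    intro p hp
    rw [hS, Finset.mem_filter, Nat.mem_primeFactors] at hp
    refine ⟨hp.1.1, ?_⟩
    have := hp.2
    exact_mod_cast (by push_cast at this ⊢; exact this : ((2 * N : ℕ) : ℝ) < (p:ℝ))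
  have hstep1 : ∀ p ∈ S, p ^ alphaP F p N ≤ p ^ K := by
    intro p hp
    obtain ⟨hpp, hpN⟩ := hmem p hp
    apply Nat.pow_le_pow_right hpp.pos
    unfold alphaP
    rw [hQ]
    exact alpha_le η N p hη hN hpp hpN
  calc ∏ p ∈ S, p ^ alphaP F p N ≤ ∏ p ∈ S, p ^ K := Finset.prod_le_prod' hstep1
    _ = (∏ p ∈ S, p) ^ K := Finset.prod_pow S K _
    _ ≤ (∏ p ∈ (Qf F N).primeFactors, p) ^ K := by
        apply Nat.pow_le_pow_left
        apply Finset.prod_le_prod_of_subset_of_one_le' (Finset.filter_subset _ _)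
        intro i hi _
        exact (Nat.prime_of_mem_primeFactors hi).one_lt.le.trans' (by norm_num)
    _ = ellf F N ^ K := rfl
end
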